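/- arXiv:1307.0784 — 10 statements merged into one kernel-verified Lean document; each statement's English description precedes it below -/
import Mathlib

section
/- For all integers n ≥ 0, i ≥ 1 and ℓ ≥ n, one has the identity C(n+i-1, n) = Σ_{k+k'=n} C(ℓ+i, k) · C(ℓ-k, k') · (-1)^{k'}, where the sum ranges over nonnegative integers k, k' with k + k' = n. -/
/-- Generalized binomial coefficient `C(a,b) = a(a-1)⋯(a-b+1)/b!` for integer `a`
(possibly negative) and natural `b`, valued in `ℚ`. -/
noncomputable def genChoose (a : ℤ) (b : ℕ) : ℚ :=
  (∏ i ∈ Finset.range b, ((a : ℚ) - i)) / (Nat.factorial b)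

lemma descPoch_smeval_eq_prod (x : ℚ) (b : ℕ) :
    (descPochhammer ℤ b).smeval x = ∏ i ∈ Finset.range b, (x - i) := by
  induction b with
  | zero => simp [descPochhammer_zero, Polynomial.smeval_one]
  | succ m ih =>
    rw [descPochhammer_succ_right, Polynomial.smeval_mul, ih, Finset.prod_range_succ,
      Polynomial.smeval_sub, Polynomial.smeval_X, Polynomial.smeval_natCast]
    ring

lemma genChoose_eq_ringChoose (a : ℤ) (b : ℕ) :
    genChoose a b = Ring.choose ((a : ℚ)) b := by
  have h := Ring.descPochhammer_eq_factorial_smul_choose ((a : ℚ)) b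
  rw [descPoch_smeval_eq_prod] at h
  rw [genChoose, h, nsmul_eq_mul,
    mul_div_cancel_left₀ _ (by exact_mod_cast b.factorial_ne_zero : ((b.factorial : ℚ)) ≠ 0)]

lemma genChoose_neg (a : ℤ) (m : ℕ) :
    genChoose a m * (-1) ^ m = genChoose ((m : ℤ) - 1 - a) m := by
  rw [genChoose, genChoose, div_mul_eq_mul_div]
  congr 1
  have : ((∏ i ∈ Finset.range m, ((a : ℚ) - i)) * (-1) ^ m)
      = ∏ i ∈ Finset.range m, ((i : ℚ) - a) := by
    rw [show ((-1 : ℚ)) ^ m = ∏ _i ∈ Finset.range m, (-1 : ℚ) by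
      rw [Finset.prod_const, Finset.card_range], ← Finset.prod_mul_distrib]
    exact Finset.prod_congr rfl fun i _ => by ring
  rw [this, ← Finset.prod_range_reflect (fun j => ((j : ℚ) - a)) m]
  refine Finset.prod_congr rfl fun j hj => ?_
  have hj' : j + 1 ≤ m := Finset.mem_range.mp hj
  have : ((m - 1 - j : ℕ) : ℚ) = (m : ℚ) - 1 - j := by
    rw [Nat.sub_sub, Nat.cast_sub (by omega)]
    push_cast; ring
  rw [this]; push_cast; ring

theorem stmt_0 (n i ℓ : ℕ) (hi : 1 ≤ i) (hℓ : n ≤ ℓ) :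
    genChoose ((n : ℤ) + i - 1) n =
      ∑ k ∈ Finset.range (n + 1),
        genChoose ((ℓ : ℤ) + i) k * genChoose ((ℓ : ℤ) - k) (n - k) * (-1) ^ (n - k) := by
  have key := Ring.add_choose_eq (R := ℚ) (r := (ℓ : ℚ) + i) (s := (n : ℚ) - ℓ - 1) n
    (Commute.all _ _)
  rw [Finset.Nat.sum_antidiagonal_eq_sum_range_succ_mk] at key
  have hl : ((ℓ : ℚ) + i) + ((n : ℚ) - ℓ - 1) = ((((n : ℤ) + i - 1) : ℤ) : ℚ) := by
    push_cast; ring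
  rw [hl] at key
  rw [genChoose_eq_ringChoose, key]
  refine Finset.sum_congr rfl fun k hk => ?_
  have hk' : k ≤ n := Nat.lt_succ_iff.mp (Finset.mem_range.mp hk)
  rw [mul_assoc, genChoose_neg, genChoose_eq_ringChoose, genChoose_eq_ringChoose]
  have h1 : ((((ℓ : ℤ) + i) : ℤ) : ℚ) = (ℓ : ℚ) + i := by push_cast; ring
  have h2 : ((((n - k : ℕ) : ℤ) - 1 - ((ℓ : ℤ) - k) : ℤ) : ℚ) = (n : ℚ) - ℓ - 1 := by
    push_cast [Nat.cast_sub hk']; ring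
  rw [h1, h2]
end

section
/- Let Λ be a finite measure on [0,1] with Λ{0} = Λ{1} = 0. For integers 1 ≤ i < j, define Γ̃_{i,≥j} = Σ_{k ≥ j-i} C(k+i, k+1) ∫_{[0,1]} x^{k-1} (1-x)^i Λ(dx) and Λ_{j,≤i} = Σ_{k = j-i}^{j-1} C(j, k+1) ∫_{[0,1]} x^{k-1} (1-x)^{j-k-1} Λ(dx). Then Γ̃_{i,≥j} = Λ_{j,≤i}. -/
/-!
Write `d = j - i`. After multiplication by `x ^ 2`, the integrands satisfy, for `0 < x < 1`,
`∑_{n > d} C(n + i - 1, i - 1) xⁿ (1 - x)ⁱ = ∑_{d < l ≤ j} C(j, l) xˡ (1 - x)^(j - l)`: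
both sides are the probability that fewer than `i` failures occur in the first `j` of a
sequence of Bernoulli(`x`) trials, read off from the negative binomial distribution of the
number of successes before the `i`-th failure, resp. from the binomial distribution. The
complementary finite sums are matched by induction on `d` using Pascal's rule, and the full
negative binomial series sums to `(1 - x)⁻ⁱ`. Since `Λ` has no atoms at `0` and `1`, the
identity holds `Λ`-a.e. on `[0, 1]`, and the nonnegative series integrates term by term.
-/

open MeasureTheory Finset

section Binomial

variable {R : Type*} [CommRing R] (x y : R)

theorem sum_range_choose_succ_mul_pow_mul_pow {n r : ℕ} (hr : r ≤ n) :
    ∑ l ∈ range (r + 1), ((n + 1).choose l : R) * x ^ l * y ^ (n + 1 - l) =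
      (x + y) * ∑ l ∈ range (r + 1), (n.choose l : R) * x ^ l * y ^ (n - l) -
        n.choose r * x ^ (r + 1) * y ^ (n - r) := by
  induction r with
  | zero => simp [pow_succ]; ring
  | succ r ih =>
    rw [sum_range_succ, sum_range_succ _ (r + 1), ih (by omega), Nat.choose_succ_succ',
      show n + 1 - (r + 1) = n - (r + 1) + 1 by omega, show n - r = n - (r + 1) + 1 by omega]
    push_cast
    ring

theorem sum_range_choose_mul_pow_mul_pow_eq_pow_mul_sum (hxy : x + y = 1) (a d : ℕ) :
    ∑ l ∈ range (d + 1), ((a + 1 + d).choose l : R) * x ^ l * y ^ (a + 1 + d - l) =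
      y ^ (a + 1) * ∑ t ∈ range (d + 1), ((t + a).choose a : R) * x ^ t := by
  induction d with
  | zero => simp
  | succ d ih =>
    rw [show a + 1 + (d + 1) = a + 1 + d + 1 by omega,
      sum_range_choose_succ_mul_pow_mul_pow x y (by omega), hxy, one_mul, sum_range_succ, ih,
      sum_range_succ _ (d + 1), show a + 1 + d - (d + 1) = a by omega,
      show d + 1 + a = a + 1 + d by omega,
      Nat.choose_symm_of_eq_add (show a + 1 + d = d + 1 + a by omega)]
    linear_combination (-((a + 1 + d).choose a : R) * x ^ (d + 1) * y ^ a) * hxy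

end Binomial

theorem hasSum_choose_mul_pow_add_mul_one_sub_pow {𝕜 : Type*} [NormedField 𝕜]
    [CompleteSpace 𝕜] {x : 𝕜} (hx : ‖x‖ < 1) (a d : ℕ) :
    HasSum (fun n ↦ ((n + (d + 1) + a).choose a : 𝕜) * x ^ (n + (d + 1)) * (1 - x) ^ (a + 1))
      (∑ l ∈ Ico (d + 1) (a + 1 + d + 1),
        ((a + 1 + d).choose l : 𝕜) * x ^ l * (1 - x) ^ (a + 1 + d - l)) := by
  have hx1 : (1 - x) ^ (a + 1) ≠ 0 :=
    pow_ne_zero _ (sub_ne_zero.2 fun h ↦ by rw [← h, norm_one] at hx; exact lt_irrefl _ hx)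
  have hbinomial : ∑ l ∈ range (a + 1 + d + 1),
      ((a + 1 + d).choose l : 𝕜) * x ^ l * (1 - x) ^ (a + 1 + d - l) = 1 := by
    calc _ = (x + (1 - x)) ^ (a + 1 + d) := by
          rw [add_pow]; exact sum_congr rfl fun l _ ↦ by ring
      _ = 1 := by rw [add_sub_cancel, one_pow]
  have hgeom := hasSum_choose_mul_geometric_of_norm_lt_one a hx
  have hsplit := sum_range_add_sum_Ico
    (fun l ↦ ((a + 1 + d).choose l : 𝕜) * x ^ l * (1 - x) ^ (a + 1 + d - l))
    (by omega : d + 1 ≤ a + 1 + d + 1)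
  rw [hbinomial, sum_range_choose_mul_pow_mul_pow_eq_pow_mul_sum x _ (add_sub_cancel x 1)]
    at hsplit
  have htail := ((hasSum_nat_add_iff' (d + 1)).mpr hgeom).mul_right ((1 - x) ^ (a + 1))
  rwa [sub_mul, one_div_mul_cancel hx1, mul_comm, ← eq_sub_of_add_eq' hsplit] at htail

theorem hasSum_choose_mul_pow_sub_one_mul_one_sub_pow {𝕜 : Type*} [NormedField 𝕜]
    [CompleteSpace 𝕜] {i j : ℕ} (hi : 1 ≤ i) (hij : i < j) {x : 𝕜} (hx0 : x ≠ 0) (hx : ‖x‖ < 1) :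
    HasSum
      (fun m ↦ ((m + j).choose (m + (j - i) + 1) : 𝕜) * (x ^ (m + (j - i) - 1) * (1 - x) ^ i))
      (∑ k ∈ Ico (j - i) j, (j.choose (k + 1) : 𝕜) * (x ^ (k - 1) * (1 - x) ^ (j - k - 1))) := by
  obtain ⟨a, rfl⟩ : ∃ a, i = a + 1 := ⟨i - 1, by omega⟩
  obtain ⟨d, hd, rfl⟩ : ∃ d, 1 ≤ d ∧ j = a + 1 + d := ⟨j - (a + 1), by omega, by omega⟩
  -- Multiplying by `x ^ 2` removes the truncated exponents `m + d - 1` and `k - 1`.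
  have hterm (m : ℕ) : ((m + (a + 1 + d)).choose (m + d + 1) : 𝕜) *
      (x ^ (m + d - 1) * (1 - x) ^ (a + 1)) * x ^ 2 =
        ((m + (d + 1) + a).choose a : 𝕜) * x ^ (m + (d + 1)) * (1 - x) ^ (a + 1) := by
    rw [Nat.choose_symm_of_eq_add (show m + (a + 1 + d) = m + d + 1 + a by omega),
      show m + (a + 1 + d) = m + (d + 1) + a by omega,
      show m + (d + 1) = m + d - 1 + 2 by omega, pow_add]
    ring
  have hsum : (∑ k ∈ Ico d (a + 1 + d), ((a + 1 + d).choose (k + 1) : 𝕜) *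
      (x ^ (k - 1) * (1 - x) ^ (a + 1 + d - k - 1))) * x ^ 2 =
        ∑ l ∈ Ico (d + 1) (a + 1 + d + 1),
          ((a + 1 + d).choose l : 𝕜) * x ^ l * (1 - x) ^ (a + 1 + d - l) := by
    rw [sum_mul, ← sum_Ico_add']
    refine sum_congr rfl fun k hk ↦ ?_
    rw [mem_Ico] at hk
    rw [show k + 1 = k - 1 + 2 by omega, pow_add,
      show a + 1 + d - k - 1 = a + 1 + d - (k - 1 + 2) by omega]
    ring
  rw [Nat.add_sub_cancel_left, ← hasSum_mul_right_iff (pow_ne_zero 2 hx0), hsum]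
  simpa only [hterm] using hasSum_choose_mul_pow_add_mul_one_sub_pow hx a d

theorem hasSum_integral_of_nonneg_of_hasSum {α ι : Type*} [MeasurableSpace α] [Countable ι]
    {μ : Measure α} {f : ι → α → ℝ} {g : α → ℝ} (hf : ∀ n, AEStronglyMeasurable (f n) μ)
    (hf0 : ∀ n, 0 ≤ᵐ[μ] f n) (hg : Integrable g μ)
    (hfg : ∀ᵐ a ∂μ, HasSum (fun n ↦ f n a) (g a)) :
    HasSum (fun n ↦ ∫ a, f n a ∂μ) (∫ a, g a ∂μ) :=
  hasSum_integral_of_dominated_convergence f hf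
    (fun n ↦ (hf0 n).mono fun _ ha ↦ (Real.norm_of_nonneg ha).le)
    (hfg.mono fun _ ha ↦ ha.summable) (hg.congr (hfg.mono fun _ ha ↦ ha.tsum_eq.symm)) hfg

theorem stmt_3 (Λ : Measure ℝ) [IsFiniteMeasure Λ]
    (h0 : Λ {0} = 0) (h1 : Λ {1} = 0) (i j : ℕ) (hi : 1 ≤ i) (hij : i < j) :
    (∑' m : ℕ, (((m + j).choose (m + (j - i) + 1) : ℝ) *
        ∫ x in Set.Icc (0:ℝ) 1, x ^ (m + (j - i) - 1) * (1 - x) ^ i ∂Λ)) =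
      ∑ k ∈ Finset.Ico (j - i) j, ((j.choose (k + 1) : ℝ) *
        ∫ x in Set.Icc (0:ℝ) 1, x ^ (k - 1) * (1 - x) ^ (j - k - 1) ∂Λ) := by
  have hIoo : ∀ᵐ x ∂Λ.restrict (Set.Icc 0 1), x ∈ Set.Ioo (0 : ℝ) 1 := by
    rw [Measure.restrict_congr_set (Ioo_ae_eq_Icc' h0 h1).symm]
    exact ae_restrict_mem measurableSet_Ioo
  have hcont (p q : ℕ) : Continuous fun x : ℝ ↦ x ^ p * (1 - x) ^ q := by fun_prop
  have hsum := hasSum_integral_of_nonneg_of_hasSum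
    (fun _ ↦ ((hcont _ _).const_mul _).aestronglyMeasurable)
    (fun _ ↦ hIoo.mono fun x hx ↦ mul_nonneg (Nat.cast_nonneg _)
      (mul_nonneg (pow_nonneg hx.1.le _) (pow_nonneg (sub_nonneg.2 hx.2.le) _)))
    ((continuous_finsetSum _ fun _ _ ↦ (hcont _ _).const_mul _).integrableOn_Icc)
    (hIoo.mono fun x hx ↦ hasSum_choose_mul_pow_sub_one_mul_one_sub_pow hi hij hx.1.ne'
      (by rw [Real.norm_of_nonneg hx.1.le]; exact hx.2))
  rw [integral_finsetSum _ fun _ _ ↦ ((hcont _ _).const_mul _).integrableOn_Icc] at hsum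
  simpa only [integral_const_mul] using hsum.tsum_eq
end

section
/- Let α ∈ (0,2) and let Λ(dx) = (Γ(2-α)Γ(α))^{-1} x^{1-α}(1-x)^{α-1} 1_{(0,1)}(x) dx be the Beta(2-α, α) measure. For integers i ≥ 1 and j ≥ 1, the jump rate Γ̃_{i,i+j} := C(i+j, j+1) ∫_0^1 x^{j-1}(1-x)^i Λ(dx) equals (1/(α Γ(α))) · (Γ(i+α)/Γ(i)) · (α/Γ(2-α)) · (Γ(j-α+1)/Γ(j+2)). -/
/-! After merging powers, the integrand is the Beta(j-α+1, i+α) kernel, so the integral equals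
Γ(j-α+1)Γ(i+α)/Γ(i+j+1); the binomial coefficient then turns 1/Γ(i+j+1) into 1/(Γ(j+2)Γ(i)). -/

open Real

theorem integral_Ioo_rpow_mul_one_sub_rpow {a b : ℝ} (ha : 0 < a) (hb : 0 < b) :
    ∫ x in Set.Ioo (0:ℝ) 1, x ^ (a - 1) * (1 - x) ^ (b - 1) =
      Gamma a * Gamma b / Gamma (a + b) := by
  rw [← MeasureTheory.integral_Ioc_eq_integral_Ioo, ← intervalIntegral.integral_of_le zero_le_one]
  apply Complex.ofReal_injective
  rw [← intervalIntegral.integral_ofReal]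
  push_cast
  rw [← Complex.Gamma_ofReal, ← Complex.Gamma_ofReal, ← Complex.Gamma_ofReal]
  push_cast
  rw [← Complex.betaIntegral_eq_Gamma_mul_div _ _ (by simpa) (by simpa), Complex.betaIntegral]
  refine intervalIntegral.integral_congr fun x hx => ?_
  rw [Set.uIcc_of_le zero_le_one] at hx
  rw [Complex.ofReal_cpow hx.1, Complex.ofReal_cpow (by linarith [hx.2])]
  push_cast
  rfl

theorem Nat.cast_choose_mul_Gamma_mul_Gamma {n k : ℕ} (h : k ≤ n) :
    (n.choose k : ℝ) * Gamma (k + 1) * Gamma (n - k + 1) = Gamma (n + 1) := by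
  rw [← Nat.cast_sub h, Gamma_nat_eq_factorial, Gamma_nat_eq_factorial, Gamma_nat_eq_factorial]
  exact_mod_cast Nat.choose_mul_factorial_mul_factorial h

theorem stmt_4 (α : ℝ) (hα : α ∈ Set.Ioo (0:ℝ) 2) (i j : ℕ) (hi : 1 ≤ i) (hj : 1 ≤ j) :
    ((i + j).choose (j + 1) : ℝ) *
        ∫ x in Set.Ioo (0:ℝ) 1,
          x ^ (j - 1) * (1 - x) ^ i *
            ((Real.Gamma (2 - α) * Real.Gamma α)⁻¹ * x ^ (1 - α) * (1 - x) ^ (α - 1)) =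
      (1 / (α * Real.Gamma α)) * (Real.Gamma ((i : ℝ) + α) / Real.Gamma (i : ℝ)) *
        (α / Real.Gamma (2 - α)) * (Real.Gamma ((j : ℝ) - α + 1) / Real.Gamma ((j : ℝ) + 2)) := by
  obtain ⟨hα0, hα2⟩ := hα
  have hj' : (1:ℝ) ≤ j := by exact_mod_cast hj
  have hi' : (1:ℝ) ≤ i := by exact_mod_cast hi
  have hbeta_form : ∀ x ∈ Set.Ioo (0:ℝ) 1,
      x ^ (j - 1) * (1 - x) ^ i *
        ((Gamma (2 - α) * Gamma α)⁻¹ * x ^ (1 - α) * (1 - x) ^ (α - 1)) =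
      (Gamma (2 - α) * Gamma α)⁻¹ *
        (x ^ ((j - α + 1) - 1) * (1 - x) ^ ((i + α) - 1)) := by
    rintro x ⟨hx0, hx1⟩
    rw [← rpow_natCast, ← rpow_natCast, Nat.cast_sub hj, Nat.cast_one,
      show (j : ℝ) - α + 1 - 1 = (j - 1) + (1 - α) by ring, rpow_add hx0,
      show (i : ℝ) + α - 1 = i + (α - 1) by ring, rpow_add (by linarith)]
    ring
  rw [MeasureTheory.setIntegral_congr_fun measurableSet_Ioo hbeta_form,
    MeasureTheory.integral_const_mul,
    integral_Ioo_rpow_mul_one_sub_rpow (by linarith) (by linarith)]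
  have hchoose := Nat.cast_choose_mul_Gamma_mul_Gamma (show j + 1 ≤ i + j by omega)
  push_cast at hchoose
  rw [show (i : ℝ) + j - (j + 1) + 1 = i by ring, show (j : ℝ) + 1 + 1 = j + 2 by ring] at hchoose
  rw [show (j : ℝ) - α + 1 + (i + α) = i + j + 1 by ring]
  have := (Gamma_pos_of_pos hα0).ne'
  have := (Gamma_pos_of_pos (show 0 < 2 - α by linarith)).ne'
  have := (Gamma_pos_of_pos (show (0:ℝ) < i by linarith)).ne'
  have := (Gamma_pos_of_pos (show (0:ℝ) < j + 2 by linarith)).ne'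
  have := (Gamma_pos_of_pos (show (0:ℝ) < i + j + 1 by linarith)).ne'
  field_simp
  linear_combination Gamma (j - α + 1) * hchoose
end

section
/- For α ∈ (0,2), α ≠ 1, let η{j} = (α/Γ(2-α)) · Γ(j-α+1)/Γ(j+2) for j ≥ 1. Then η is a probability measure on the positive integers, and its generating function satisfies φ_η(s) = Σ_{j≥1} η{j} s^j = 1 + ((1-s)^α - (1-s)) / ((α-1) s) for s ∈ (0,1). -/
/-!
For `α ∉ ℕ`, `Γ(n - α) = (-1)ⁿ (α choose n) n! Γ(-α)`, which turns the weights into binomial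
coefficients: `(α - 1) η{j} = (-1)^(j+1) (α choose (j+1))`. The generating function is therefore
the binomial series of `(1 - s)^α` with its first two terms removed, divided by `(α - 1) s`.
The weights are nonnegative and the generating function tends to `1` as `s → 1⁻`, so by monotone
convergence they sum to `1`.
-/

open Filter Topology Set Polynomial
open scoped Nat

theorem Ring.choose_succ_mul_succ {K : Type*} [Field K] [CharZero K] (a : K) (n : ℕ) :
    Ring.choose a (n + 1) * (n + 1) = Ring.choose a n * (a - n) := by
  have h := Ring.descPochhammer_eq_factorial_smul_choose a (n + 1)
  rw [descPochhammer_succ_right, smeval_mul, Ring.descPochhammer_eq_factorial_smul_choose,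
    smeval_sub, smeval_X, smeval_natCast] at h
  simp only [nsmul_eq_mul, Nat.factorial_succ, pow_one, pow_zero] at h
  push_cast at h
  apply mul_left_cancel₀ (Nat.cast_ne_zero.mpr n.factorial_ne_zero : (n ! : K) ≠ 0)
  linear_combination -h

theorem Real.hasSum_choose_mul_pow (a : ℝ) {x : ℝ} (hx : |x| < 1) :
    HasSum (fun n : ℕ => Ring.choose a n * x ^ n) ((1 + x) ^ a) := by
  have hx' : x ∈ Metric.eball (0 : ℝ) 1 := by
    rw [Metric.mem_eball, edist_zero_right, ← ofReal_norm, ENNReal.ofReal_lt_one]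
    exact hx
  simpa [binomialSeries, FormalMultilinearSeries.ofScalars_apply_eq, mul_comm] using
    Real.one_add_rpow_hasFPowerSeriesOnBall_zero.hasSum hx'

theorem Real.Gamma_natCast_sub (a : ℝ) (ha : ∀ k : ℕ, a ≠ k) (n : ℕ) :
    Real.Gamma (n - a) = (-1) ^ n * Ring.choose a n * n ! * Real.Gamma (-a) := by
  induction n with
  | zero => simp
  | succ n ih =>
    have hna : (n : ℝ) - a ≠ 0 := sub_ne_zero.mpr (ha n).symm
    rw [Nat.cast_succ, add_sub_right_comm, Real.Gamma_add_one hna, ih, Nat.factorial_succ,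
      Nat.cast_mul, pow_succ]
    push_cast
    linear_combination ((-1) ^ n * (n ! : ℝ) * Real.Gamma (-a)) * Ring.choose_succ_mul_succ a n

theorem hasSum_of_nonneg_of_tendsto_powerSeries {a : ℕ → ℝ} (ha : ∀ n, 0 ≤ a n) {G : ℝ → ℝ}
    {L : ℝ} (hG : ∀ s ∈ Ioo (0 : ℝ) 1, HasSum (fun n => a n * s ^ n) (G s))
    (hL : Tendsto G (𝓝[<] 1) (𝓝 L)) : HasSum a L := by
  have hs : ∀ᶠ s in 𝓝[<] (1 : ℝ), s ∈ Ioo (0 : ℝ) 1 := Ioo_mem_nhdsLT zero_lt_one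
  have hpartial : ∀ n, ∑ i ∈ Finset.range n, a i ≤ L := by
    intro n
    have hpoly : Tendsto (fun s : ℝ => ∑ i ∈ Finset.range n, a i * s ^ i) (𝓝[<] 1)
        (𝓝 (∑ i ∈ Finset.range n, a i)) := by
      have : Continuous (fun s : ℝ => ∑ i ∈ Finset.range n, a i * s ^ i) := by fun_prop
      simpa using (this.tendsto 1).mono_left nhdsWithin_le_nhds
    refine le_of_tendsto_of_tendsto hpoly hL (hs.mono fun s hs => ?_)
    exact sum_le_hasSum _ (fun i _ => mul_nonneg (ha i) (pow_nonneg hs.1.le i)) (hG s hs)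
  have hsum : Summable a := summable_of_sum_range_le ha hpartial
  have hlower : L ≤ ∑' n, a n := by
    refine le_of_tendsto hL (hs.mono fun s hs => ?_)
    refine hasSum_le (fun n => ?_) (hG s hs) hsum.hasSum
    exact mul_le_of_le_one_right (ha n) (pow_le_one₀ hs.1.le hs.2.le)
  convert hsum.hasSum
  exact le_antisymm hlower (hsum.tsum_le_of_sum_range_le hpartial)

noncomputable def fixationWeight (α : ℝ) (j : ℕ) : ℝ :=
  α / Real.Gamma (2 - α) * (Real.Gamma ((j : ℝ) - α + 1) / Real.Gamma ((j : ℝ) + 2))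

theorem fixationWeight_pos {α : ℝ} (hα0 : 0 < α) (hα2 : α < 2) {j : ℕ} (hj : 1 ≤ j) :
    0 < fixationWeight α j := by
  have hj' : (1 : ℝ) ≤ j := by exact_mod_cast hj
  have h1 := Real.Gamma_pos_of_pos (show 0 < 2 - α by linarith)
  have h2 := Real.Gamma_pos_of_pos (show 0 < (j : ℝ) - α + 1 by linarith)
  have h3 := Real.Gamma_pos_of_pos (show 0 < (j : ℝ) + 2 by linarith)
  unfold fixationWeight
  positivity

theorem sub_one_mul_fixationWeight {α : ℝ} (hα : ∀ k : ℕ, α ≠ k) (j : ℕ) :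
    (α - 1) * fixationWeight α j = (-1) ^ (j + 1) * Ring.choose α (j + 1) := by
  have hα0 : α ≠ 0 := by exact_mod_cast hα 0
  have hα1 : α - 1 ≠ 0 := sub_ne_zero.mpr (by exact_mod_cast hα 1)
  have hΓ : Real.Gamma (-α) ≠ 0 := Real.Gamma_ne_zero fun m h => hα m (neg_inj.mp h)
  have hΓ2 : Real.Gamma (2 - α) = α * (α - 1) * Real.Gamma (-α) := by
    have h2 := Real.Gamma_natCast_sub α hα 2
    have hc2 := Ring.choose_succ_mul_succ α 1
    norm_num [Nat.factorial] at h2 hc2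
    linear_combination h2 + Real.Gamma (-α) * hc2
  have hΓj := Real.Gamma_natCast_sub α hα (j + 1)
  have hfact := Real.Gamma_nat_eq_factorial (j + 1)
  push_cast at hΓj hfact
  rw [fixationWeight, show (j : ℝ) - α + 1 = j + 1 - α by ring,
    show (j : ℝ) + 2 = j + 1 + 1 by ring, hΓj, hfact, hΓ2]
  field_simp

theorem hasSum_fixationWeight_mul_pow {α : ℝ} (hα : ∀ k : ℕ, α ≠ k) {s : ℝ} (hs : |s| < 1)
    (hs0 : s ≠ 0) :
    HasSum (fun j => fixationWeight α (j + 1) * s ^ j)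
      (((1 - s) ^ α - 1 + α * s) / ((α - 1) * s ^ 2)) := by
  have hα1 : α - 1 ≠ 0 := sub_ne_zero.mpr (by exact_mod_cast hα 1)
  have hbin := Real.hasSum_choose_mul_pow α (x := -s) (by rwa [abs_neg])
  rw [← hasSum_nat_add_iff' 2] at hbin
  have hterm : (fun j => fixationWeight α (j + 1) * s ^ j) =
      fun j => Ring.choose α (j + 2) * (-s) ^ (j + 2) / ((α - 1) * s ^ 2) := by
    funext j
    have hw : (α - 1) * fixationWeight α (j + 1) = (-1) ^ (j + 2) * Ring.choose α (j + 2) :=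
      sub_one_mul_fixationWeight hα (j + 1)
    rw [neg_pow, mul_left_comm, ← mul_assoc, ← hw, pow_add]
    field_simp
  have hval : (1 - s) ^ α - 1 + α * s =
      (1 + -s) ^ α - ∑ i ∈ Finset.range 2, Ring.choose α i * (-s) ^ i := by
    simp only [Finset.sum_range_succ, Finset.sum_range_zero, Ring.choose_zero_right,
      Ring.choose_one_right, ← sub_eq_add_neg]
    ring
  rw [hterm, hval]
  exact hbin.div_const _

theorem tendsto_one_sub_rpow_sub_div_nhdsLT_one {α : ℝ} (hα0 : 0 < α) (hα1 : α ≠ 1) :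
    Tendsto (fun s : ℝ => ((1 - s) ^ α - 1 + α * s) / ((α - 1) * s ^ 2)) (𝓝[<] 1) (𝓝 1) := by
  have hden : (α - 1) * (1 : ℝ) ^ 2 ≠ 0 := by simpa [sub_eq_zero] using hα1
  have hcont : ContinuousAt (fun s : ℝ => ((1 - s) ^ α - 1 + α * s) / ((α - 1) * s ^ 2)) 1 :=
    ((((continuousAt_const.sub continuousAt_id).rpow_const (Or.inr hα0.le)).sub
      continuousAt_const).add (by fun_prop)).div (by fun_prop) hden
  have hval : ((1 - 1 : ℝ) ^ α - 1 + α * 1) / ((α - 1) * 1 ^ 2) = 1 := by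
    rw [sub_self, Real.zero_rpow hα0.ne']
    field_simp [sub_ne_zero.mpr hα1]
    ring
  simpa only [hval] using hcont.tendsto.mono_left nhdsWithin_le_nhds

theorem stmt_5 (α : ℝ) (hα : α ∈ Set.Ioo (0:ℝ) 2) (hα1 : α ≠ 1) (η : ℕ → ℝ)
    (hη : ∀ j : ℕ, 1 ≤ j →
      η j = α / Real.Gamma (2 - α) * (Real.Gamma ((j : ℝ) - α + 1) / Real.Gamma ((j : ℝ) + 2))) :
    (∀ j : ℕ, 1 ≤ j → 0 ≤ η j) ∧
    (∑' j : ℕ, η (j + 1)) = 1 ∧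
    ∀ s ∈ Set.Ioo (0:ℝ) 1,
      (∑' j : ℕ, η (j + 1) * s ^ (j + 1)) =
        1 + ((1 - s) ^ α - (1 - s)) / ((α - 1) * s) := by
  obtain ⟨hα0, hα2⟩ := hα
  have hnat : ∀ k : ℕ, α ≠ k := by
    rintro (_ | _ | k) hk <;> push_cast at hk
    exacts [hα0.ne' hk, hα1 hk, by linarith [k.cast_nonneg (α := ℝ)]]
  have hηw (j : ℕ) : η (j + 1) = fixationWeight α (j + 1) := hη (j + 1) (Nat.le_add_left 1 j)
  have hgen : ∀ s ∈ Ioo (0 : ℝ) 1, HasSum (fun j => η (j + 1) * s ^ j)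
      (((1 - s) ^ α - 1 + α * s) / ((α - 1) * s ^ 2)) := fun s hs => by
    simpa only [hηw] using
      hasSum_fixationWeight_mul_pow hnat (abs_lt.mpr ⟨by linarith [hs.1], hs.2⟩) hs.1.ne'
  refine ⟨fun j hj => (hη j hj).symm ▸ (fixationWeight_pos hα0 hα2 hj).le, ?_, fun s hs => ?_⟩
  · refine (hasSum_of_nonneg_of_tendsto_powerSeries (fun j => ?_) hgen
      (tendsto_one_sub_rpow_sub_div_nhdsLT_one hα0 hα1)).tsum_eq
    exact hηw j ▸ (fixationWeight_pos hα0 hα2 (Nat.le_add_left 1 j)).le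
  · have hs0 : s ≠ 0 := hs.1.ne'
    have hα1' : α - 1 ≠ 0 := sub_ne_zero.mpr hα1
    calc ∑' j : ℕ, η (j + 1) * s ^ (j + 1) = s * ∑' j : ℕ, η (j + 1) * s ^ j := by
          rw [← tsum_mul_left]
          exact tsum_congr fun j => by ring
      _ = 1 + ((1 - s) ^ α - (1 - s)) / ((α - 1) * s) := by
          rw [(hgen s hs).tsum_eq]
          field_simp
          ring
end

section
/- For the renewal process on Z^+ started at 0 with interarrival law η{j} = (α/Γ(2-α))·Γ(j-α+1)/Γ(j+2) (j ≥ 1) in the case α = 1/2, the renewal measure satisfies P(j ∈ S) = (1/2)·(Γ(j+1/2)/(Γ(1/2)Γ(j+1)) + 1_{j=0}) for all j ≥ 0; equivalently, Σ_{j≥0} P(j ∈ S) s^j = (1/2)(1/√(1-s) + 1) for s ∈ (0,1). -/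
open Real Finset Nat

/-!
Since `Γ(n + 1/2) / (Γ(1/2) n!) = B n / 4 ^ n` with `B n = (2n).choose n`, the interarrival law is
`η j = C j / 4 ^ j` (Catalan numbers) and the claimed renewal masses are `(B j / 4 ^ j + [j = 0]) / 2`.
Multiplying by `4 ^ j`, the renewal equation for them becomes `∑_{i<j} C (j-i) B i + C j = B j`,
which follows from `2 ∑_{k+l=n} C k B l = B (n+1)`, itself obtained by symmetrising with
`B k = (k+1) C k`; as the renewal equation determines `u` from `u 0`, `u` is this sequence.
Its generating function is the binomial series of `(1 - s)^(-1/2)`, whose coefficients are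
`Ring.choose (n - 1/2) n = B n / 4 ^ n`.
-/

section
variable {K : Type*} [Field K] [CharZero K]

theorem centralBinom_succ_div_four_pow (n : ℕ) :
    (centralBinom (n + 1) : K) / 4 ^ (n + 1) = (n + 1 / 2) / (n + 1) * (centralBinom n / 4 ^ n) := by
  have h : ((n : K) + 1) * centralBinom (n + 1) = 2 * (2 * n + 1) * centralBinom n := by
    exact_mod_cast succ_mul_centralBinom_succ n
  have hn : (n : K) + 1 ≠ 0 := by exact_mod_cast n.succ_ne_zero
  rw [pow_succ]
  field_simp
  linear_combination 2 * h

theorem Ring.choose_nat_sub_half (n : ℕ) :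
    Ring.choose ((n : K) - 1 / 2) n = centralBinom n / 4 ^ n := by
  induction n with
  | zero => simp
  | succ n ih =>
    have h := Ring.choose_smul_choose ((n + 1 : ℕ) - 1 / 2 : K) (Nat.le_add_left 1 n)
    rw [Nat.add_sub_cancel, Ring.choose_one_right, Nat.choose_one_right, nsmul_eq_mul,
      show ((n + 1 : ℕ) : K) - 1 / 2 - (1 : ℕ) = n - 1 / 2 by push_cast; ring, ih] at h
    have hn : (n : K) + 1 ≠ 0 := by exact_mod_cast n.succ_ne_zero
    rw [centralBinom_succ_div_four_pow, div_mul_eq_mul_div, eq_div_iff hn]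
    push_cast at h ⊢
    linear_combination h

end

theorem Real.Gamma_nat_add_half_div (n : ℕ) :
    Gamma (n + 1 / 2) / (Gamma (1 / 2) * Gamma (n + 1)) = centralBinom n / 4 ^ n := by
  have hΓ : ∀ x : ℝ, 0 < x → Gamma x ≠ 0 := fun x hx => (Gamma_pos_of_pos hx).ne'
  induction n with
  | zero => simpa using hΓ (1 / 2) (by norm_num)
  | succ n ih =>
    push_cast
    rw [centralBinom_succ_div_four_pow, ← ih, show (n : ℝ) + 1 + 1 / 2 = n + 1 / 2 + 1 by ring,
      Gamma_add_one (by positivity), Gamma_add_one (by positivity)]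
    have hΓhalf := hΓ (1 / 2) (by norm_num)
    have hΓsucc := hΓ (n + 1) (by positivity)
    field_simp

theorem hasSum_centralBinom_div_four_pow_mul_pow {s : ℝ} (hs : |s| < 1) :
    HasSum (fun n => (centralBinom n / 4 ^ n : ℝ) * s ^ n) (1 / √(1 - s)) := by
  have h := (one_div_one_sub_rpow_hasFPowerSeriesOnBall_zero (1 / 2)).hasSum (y := s)
    (by simpa [enorm_eq_nnnorm, ← NNReal.coe_lt_one] using hs)
  have e : ∀ n : ℕ, Ring.choose (1 / 2 + n - 1 : ℝ) n = centralBinom n / 4 ^ n := fun n => by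
    rw [show (1 / 2 : ℝ) + n - 1 = n - 1 / 2 by ring, Ring.choose_nat_sub_half]
  simpa only [FormalMultilinearSeries.ofScalars_apply_eq, zero_add, e, smul_eq_mul,
    ← sqrt_eq_rpow] using h

theorem two_mul_sum_antidiagonal_catalan_mul_centralBinom (n : ℕ) :
    2 * ∑ p ∈ antidiagonal n, catalan p.1 * centralBinom p.2 = centralBinom (n + 1) := by
  have hswap := Finset.Nat.sum_antidiagonal_swap (n := n)
    (f := fun p => catalan p.1 * centralBinom p.2)
  rw [two_mul]
  nth_rw 1 [← hswap]
  rw [← sum_add_distrib, ← succ_mul_catalan_eq_centralBinom, catalan_succ', mul_sum]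
  refine sum_congr rfl fun p hp => ?_
  rw [HasAntidiagonal.mem_antidiagonal] at hp
  simp only [Prod.fst_swap, Prod.snd_swap, ← succ_mul_catalan_eq_centralBinom, ← hp]
  ring

theorem sum_range_catalan_mul_centralBinom_add_catalan (j : ℕ) :
    ∑ i ∈ range j, catalan (j - i) * centralBinom i + catalan j = centralBinom j := by
  have hsum := two_mul_sum_antidiagonal_catalan_mul_centralBinom j
  rw [← Finset.Nat.sum_antidiagonal_swap] at hsum
  simp only [Prod.fst_swap, Prod.snd_swap] at hsum
  rw [Finset.Nat.sum_antidiagonal_eq_sum_range_succ (fun a b => catalan b * centralBinom a),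
    sum_range_succ, Nat.sub_self, catalan_zero, one_mul] at hsum
  have hB : (j + 1) * (centralBinom (j + 1) + 2 * catalan j) = (j + 1) * (4 * centralBinom j) := by
    rw [mul_add, succ_mul_centralBinom_succ, mul_left_comm, succ_mul_catalan_eq_centralBinom]
    ring
  have := Nat.eq_of_mul_eq_mul_left j.succ_pos hB
  omega

theorem catalan_div_four_pow_eq_Gamma (j : ℕ) :
    (catalan j : ℝ) / 4 ^ j = 1 / 2 / Gamma (3 / 2) * (Gamma (j + 1 / 2) / Gamma (j + 2)) := by
  have hC : ((j : ℝ) + 1) * catalan j = centralBinom j := by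
    exact_mod_cast succ_mul_catalan_eq_centralBinom j
  have hΓ : Gamma (1 / 2) * Gamma (j + 1) ≠ 0 :=
    mul_ne_zero (Gamma_pos_of_pos (by norm_num)).ne' (Gamma_pos_of_pos (by positivity)).ne'
  have hratio := Gamma_nat_add_half_div j
  rw [show (3 / 2 : ℝ) = 1 / 2 + 1 by norm_num, show (j : ℝ) + 2 = j + 1 + 1 by ring,
    Gamma_add_one (by norm_num), Gamma_add_one (by positivity)]
  rw [(div_eq_iff hΓ).1 hratio]
  field_simp
  linear_combination hC

theorem eq_of_renewal_equation {R : Type*} [AddCommMonoid R] [Mul R] {η u v : ℕ → R}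
    (h0 : u 0 = v 0) (hu : ∀ i, 1 ≤ i → u i = ∑ j ∈ range i, η (i - j) * u j)
    (hv : ∀ i, 1 ≤ i → v i = ∑ j ∈ range i, η (i - j) * v j) : u = v := by
  funext n
  induction n using Nat.strong_induction_on with
  | _ n ih =>
    rcases Nat.eq_zero_or_pos n with rfl | hn
    · exact h0
    · rw [hu n hn, hv n hn]
      exact sum_congr rfl fun j hj => by rw [ih j (mem_range.1 hj)]

noncomputable def renewalMass (j : ℕ) : ℝ :=
  1 / 2 * (centralBinom j / 4 ^ j + if j = 0 then 1 else 0)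

theorem renewalMass_eq_sum (i : ℕ) (hi : 1 ≤ i) :
    renewalMass i = ∑ j ∈ range i, (catalan (i - j) / 4 ^ (i - j) : ℝ) * renewalMass j := by
  have hterm : ∀ j ∈ range i, (catalan (i - j) / 4 ^ (i - j) : ℝ) * renewalMass j
      = 1 / 2 * ((catalan (i - j) * centralBinom j : ℕ) / 4 ^ i)
        + if j = 0 then 1 / 2 * ((catalan i : ℝ) / 4 ^ i) else 0 := by
    intro j hj
    have h4 : (4 : ℝ) ^ i = 4 ^ (i - j) * 4 ^ j := by
      rw [← pow_add, Nat.sub_add_cancel (mem_range.1 hj).le]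
    rcases eq_or_ne j 0 with rfl | hj0
    · rw [renewalMass, if_pos rfl, if_pos rfl, Nat.sub_zero, centralBinom_zero]
      push_cast
      ring
    · rw [renewalMass, if_neg hj0, if_neg hj0, h4]
      push_cast
      ring
  rw [sum_congr rfl hterm, sum_add_distrib, sum_ite_eq', if_pos (mem_range.2 hi), ← mul_sum,
    ← sum_div, ← Nat.cast_sum, renewalMass, if_neg (by omega),
    ← sum_range_catalan_mul_centralBinom_add_catalan i]
  push_cast
  ring

theorem hasSum_renewalMass_mul_pow {s : ℝ} (hs : |s| < 1) :
    HasSum (fun j => renewalMass j * s ^ j) (1 / 2 * (1 / √(1 - s) + 1)) := by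
  refine (((hasSum_centralBinom_div_four_pow_mul_pow hs).add
    (hasSum_ite_eq 0 (1 : ℝ))).mul_left (1 / 2)).congr_fun fun j => ?_
  rcases eq_or_ne j 0 with rfl | hj
  · simp [renewalMass]
  · rw [renewalMass, if_neg hj]
    ring

/-- Renewal measure of the range of the fixation line of the Beta(3/2,1/2)-coalescent
(case α = 1/2): interarrival law `η j = (α/Γ(2-α)) Γ(j-α+1)/Γ(j+2)` with `α = 1/2`. -/
theorem stmt_8 (η u : ℕ → ℝ)
    (hη : ∀ j : ℕ, 1 ≤ j →
      η j = (1/2) / Real.Gamma (2 - 1/2) *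
        (Real.Gamma ((j : ℝ) - 1/2 + 1) / Real.Gamma ((j : ℝ) + 2)))
    (hu0 : u 0 = 1)
    (hu : ∀ i : ℕ, 1 ≤ i → u i = ∑ j ∈ Finset.range i, η (i - j) * u j) :
    (∀ j : ℕ, u j = 1/2 *
        (Real.Gamma ((j : ℝ) + 1/2) / (Real.Gamma (1/2) * Real.Gamma ((j : ℝ) + 1)) +
          if j = 0 then 1 else 0)) ∧
    ∀ s ∈ Set.Ioo (0:ℝ) 1,
      (∑' j : ℕ, u j * s ^ j) = 1/2 * (1 / Real.sqrt (1 - s) + 1) := by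
  have hη' : ∀ k, 1 ≤ k → η k = catalan k / 4 ^ k := fun k hk => by
    rw [hη k hk, catalan_div_four_pow_eq_Gamma]
    norm_num [sub_add]
  have hu' : ∀ i, 1 ≤ i → u i = ∑ j ∈ range i, (catalan (i - j) / 4 ^ (i - j) : ℝ) * u j :=
    fun i hi => by
      rw [hu i hi]
      exact sum_congr rfl fun j hj => by rw [hη' _ (Nat.sub_pos_of_lt (mem_range.1 hj))]
  obtain rfl : u = renewalMass :=
    eq_of_renewal_equation (η := fun k => (catalan k : ℝ) / 4 ^ k) (by norm_num [hu0, renewalMass])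
      hu' renewalMass_eq_sum
  refine ⟨fun j => by rw [renewalMass, Gamma_nat_add_half_div], fun s hs => ?_⟩
  exact (hasSum_renewalMass_mul_pow (abs_lt.2 ⟨by linarith [hs.1], hs.2⟩)).tsum_eq
end

section
/- For the Bolthausen-Sznitman coalescent (α = 1), the generating function of the record probabilities satisfies Σ_{i≥2} P(i ∈ T) s^i = s ∫_0^s (-u/((1-u)log(1-u))) du for s ∈ (0,1), where P(i ∈ T) = P(i-2 ∈ S)/Λ_i with Λ_i = i-1 and S the renewal range with interarrival law η{j} = 1/(j(j+1)). -/
/-!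
Conditioning on the first renewal gives the renewal equation `U = 1 + H U` for the generating
functions `U(t) = ∑ P(k ∈ S) tᵏ` and `H(t) = ∑ η{j} tʲ`. Telescoping `1/(j(j+1)) = 1/j - 1/(j+1)`
against the logarithm series gives `H(t) = 1 + (1 - t) log(1 - t) / t`, hence
`U(t) = -t / ((1 - t) log(1 - t))`. Since `P(k ∈ S) ∈ [0, 1]`, the power series may be integrated
termwise on `(0, s)`, and `∫₀ˢ tᵏ dt = sᵏ⁺¹ / (k + 1)` produces the weights `1 / (i - 1)`.
-/

open Real MeasureTheory Finset

section Renewal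

variable {R : Type*} {η u : ℕ → R}

lemma renewal_sum_range_succ [Mul R] [AddCommMonoid R]
    (hu : ∀ i : ℕ, 1 ≤ i → u i = ∑ j ∈ range i, η (i - j) * u j) (n : ℕ) :
    ∑ k ∈ range (n + 1), η (k + 1) * u (n - k) = u (n + 1) := by
  rw [hu (n + 1) (by omega), ← sum_range_reflect]
  refine sum_congr rfl fun k hk => ?_
  have hk : k < n + 1 := mem_range.mp hk
  congr 2 <;> omega

lemma renewal_mem_Icc [Semiring R] [PartialOrder R] [IsOrderedRing R]
    (hη : ∀ j, 0 ≤ η (j + 1)) (hη_sum : ∀ n, ∑ j ∈ range n, η (j + 1) ≤ 1)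
    (hu0 : u 0 = 1) (hu : ∀ i : ℕ, 1 ≤ i → u i = ∑ j ∈ range i, η (i - j) * u j) (k : ℕ) :
    u k ∈ Set.Icc 0 1 := by
  induction k using Nat.strong_induction_on with
  | _ k ih =>
    obtain _ | n := k
    · simp [hu0]
    have ih' : ∀ k ∈ range (n + 1), u (n - k) ∈ Set.Icc 0 1 :=
      fun k _ => ih _ (by omega)
    rw [← renewal_sum_range_succ hu n]
    refine ⟨sum_nonneg fun k hk => mul_nonneg (hη k) (ih' k hk).1, ?_⟩
    calc ∑ k ∈ range (n + 1), η (k + 1) * u (n - k)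
        ≤ ∑ k ∈ range (n + 1), η (k + 1) :=
          sum_le_sum fun k hk => mul_le_of_le_one_right (hη k) (ih' k hk).2
      _ ≤ 1 := hη_sum _

lemma tsum_renewal_mul [NormedCommRing R] [CompleteSpace R]
    (hu : ∀ i : ℕ, 1 ≤ i → u i = ∑ j ∈ range i, η (i - j) * u j) {t : R}
    (hη : Summable fun n => ‖η (n + 1) * t ^ (n + 1)‖) (hu_sum : Summable fun k => ‖u k * t ^ k‖) :
    (∑' n, η (n + 1) * t ^ (n + 1)) * ∑' k, u k * t ^ k = ∑' k, u k * t ^ k - u 0 := by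
  have hconv : ∀ n, ∑ k ∈ range (n + 1), η (k + 1) * t ^ (k + 1) * (u (n - k) * t ^ (n - k))
      = u (n + 1) * t ^ (n + 1) := by
    intro n
    rw [← renewal_sum_range_succ hu n, sum_mul]
    refine sum_congr rfl fun k hk => ?_
    rw [show n + 1 = (k + 1) + (n - k) by have := mem_range.mp hk; omega, pow_add]
    ring
  rw [tsum_mul_tsum_eq_tsum_sum_range_of_summable_norm hη hu_sum, hu_sum.of_norm.tsum_eq_zero_add]
  simp [hconv]

end Renewal

lemma integral_Ioo_const_mul_pow (c : ℝ) {s : ℝ} (hs : 0 ≤ s) (k : ℕ) :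
    ∫ t in Set.Ioo 0 s, c * t ^ k = c * s ^ (k + 1) / (k + 1) := by
  rw [← integral_Ioc_eq_integral_Ioo, ← intervalIntegral.integral_of_le hs,
    intervalIntegral.integral_const_mul, integral_pow, zero_pow k.succ_ne_zero]
  ring

lemma integral_Ioo_tsum_mul_pow {a : ℕ → ℝ} {C s : ℝ} (ha : ∀ k, |a k| ≤ C)
    (hs0 : 0 ≤ s) (hs1 : s < 1) :
    ∫ t in Set.Ioo 0 s, ∑' k, a k * t ^ k = ∑' k, a k * s ^ (k + 1) / (k + 1) := by
  have hint : ∀ k, IntegrableOn (fun t => a k * t ^ k) (Set.Ioo 0 s) := fun k =>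
    (continuous_const.mul (continuous_pow k)).continuousOn.integrableOn_Icc.mono_set
      Set.Ioo_subset_Icc_self
  have hnorm : ∀ k, ∫ t in Set.Ioo 0 s, ‖a k * t ^ k‖ = |a k| * s ^ (k + 1) / (k + 1) := by
    intro k
    rw [← integral_Ioo_const_mul_pow _ hs0]
    refine setIntegral_congr_fun measurableSet_Ioo fun t ht => ?_
    rw [norm_mul, norm_pow, norm_eq_abs, norm_eq_abs, abs_of_pos ht.1]
  have hsum : Summable fun k => ∫ t in Set.Ioo 0 s, ‖a k * t ^ k‖ := by
    simp_rw [hnorm]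
    refine ((summable_geometric_of_lt_one hs0 hs1).mul_left C).of_nonneg_of_le
      (fun k => by positivity) fun k => ?_
    rw [div_le_iff₀ (by positivity), pow_succ]
    calc |a k| * (s ^ k * s) ≤ C * (s ^ k * ((k : ℝ) + 1)) := by
          gcongr ?_ * (_ * ?_)
          · exact (abs_nonneg _).trans (ha 0)
          · exact ha k
          · linarith [k.cast_nonneg (α := ℝ)]
      _ = C * s ^ k * (k + 1) := by ring
  rw [← integral_tsum_of_summable_integral_norm hint hsum]
  exact tsum_congr fun k => integral_Ioo_const_mul_pow _ hs0 k

lemma sum_range_one_div_mul_add_two (n : ℕ) :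
    ∑ j ∈ range n, (1 : ℝ) / ((j + 1) * (j + 2)) = 1 - 1 / (n + 1) := by
  induction n with
  | zero => norm_num
  | succ n ih =>
    rw [sum_range_succ, ih]
    push_cast
    field_simp
    ring

lemma hasSum_pow_div_mul_add_two {t : ℝ} (ht : |t| < 1) (ht0 : t ≠ 0) :
    HasSum (fun n : ℕ => t ^ (n + 1) / ((n + 1) * (n + 2))) (1 + (1 - t) * log (1 - t) / t) := by
  have hlog := hasSum_pow_div_log_of_abs_lt_one ht
  have hlog_shift : HasSum (fun n : ℕ => t ^ (n + 2) / (n + 2)) (-log (1 - t) - t) := by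
    have := (hasSum_nat_add_iff' 1).mpr hlog
    simpa [add_assoc, one_add_one_eq_two] using this
  have hterm : ∀ n : ℕ, t ^ (n + 1) / ((n + 1) * (n + 2))
      = t ^ (n + 1) / (n + 1) - t ^ (n + 2) / (n + 2) / t := by
    intro n
    rw [pow_succ t (n + 1)]
    field_simp
    ring
  have hval : 1 + (1 - t) * log (1 - t) / t = -log (1 - t) - (-log (1 - t) - t) / t := by
    field_simp
    ring
  simpa only [hterm, hval] using hlog.sub (hlog_shift.div_const t)

section BolthausenSznitman

variable {η u : ℕ → ℝ} (hη : ∀ n : ℕ, η (n + 1) = 1 / ((n + 1) * (n + 2))) (hu0 : u 0 = 1)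
  (hu : ∀ i : ℕ, 1 ≤ i → u i = ∑ j ∈ range i, η (i - j) * u j)
include hη hu0 hu

lemma renewal_abs_le_one (k : ℕ) : |u k| ≤ 1 := by
  have hmem := renewal_mem_Icc (fun j => by rw [hη]; positivity)
    (fun n => by simp only [hη, sum_range_one_div_mul_add_two, sub_le_self_iff]; positivity)
    hu0 hu k
  exact abs_le.mpr ⟨by linarith [hmem.1], hmem.2⟩

lemma tsum_renewal_mul_pow {t : ℝ} (ht : t ∈ Set.Ioo 0 1) :
    ∑' k, u k * t ^ k = -t / ((1 - t) * log (1 - t)) := by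
  obtain ⟨ht0, ht1⟩ := ht
  have hH : HasSum (fun n => η (n + 1) * t ^ (n + 1)) (1 + (1 - t) * log (1 - t) / t) := by
    simpa only [hη, one_div_mul_eq_div] using
      hasSum_pow_div_mul_add_two (abs_lt.mpr ⟨by linarith, ht1⟩) ht0.ne'
  have hu_norm : Summable fun k => ‖u k * t ^ k‖ := by
    refine (summable_geometric_of_lt_one ht0.le ht1).of_nonneg_of_le (fun _ => norm_nonneg _)
      fun k => ?_
    rw [norm_mul, norm_pow, norm_eq_abs, norm_eq_abs, abs_of_pos ht0]
    exact mul_le_of_le_one_left (by positivity) (renewal_abs_le_one hη hu0 hu k)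
  have key := tsum_renewal_mul hu hH.summable.norm hu_norm
  rw [hH.tsum_eq, hu0] at key
  have hlog : log (1 - t) ≠ 0 := (log_neg (by linarith) (by linarith)).ne
  have h1t : 1 - t ≠ 0 := by linarith
  rw [eq_div_iff (mul_ne_zero h1t hlog)]
  field_simp at key
  linarith

end BolthausenSznitman

/-- `u k = P(k ∈ S)`, and the `k`-th term is `P(i ∈ T) sⁱ` with `i = k + 2`. -/
theorem stmt_14 (η u : ℕ → ℝ)
    (hη : ∀ j : ℕ, 1 ≤ j → η j = 1 / ((j : ℝ) * ((j : ℝ) + 1)))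
    (hu0 : u 0 = 1)
    (hu : ∀ i : ℕ, 1 ≤ i → u i = ∑ j ∈ Finset.range i, η (i - j) * u j)
    (s : ℝ) (hs : s ∈ Set.Ioo (0:ℝ) 1) :
    (∑' k : ℕ, u k / ((k : ℝ) + 1) * s ^ (k + 2)) =
      s * ∫ t in Set.Ioo (0:ℝ) s, -t / ((1 - t) * Real.log (1 - t)) := by
  have hη' : ∀ n : ℕ, η (n + 1) = 1 / ((n + 1) * (n + 2)) := fun n => by
    rw [hη (n + 1) n.succ_pos]
    push_cast
    ring
  have hgen : ∀ t ∈ Set.Ioo 0 s, ∑' k, u k * t ^ k = -t / ((1 - t) * log (1 - t)) :=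
    fun t ht => tsum_renewal_mul_pow hη' hu0 hu ⟨ht.1, ht.2.trans hs.2⟩
  rw [← setIntegral_congr_fun measurableSet_Ioo hgen,
    integral_Ioo_tsum_mul_pow (renewal_abs_le_one hη' hu0 hu) hs.1.le hs.2, ← tsum_mul_left]
  exact tsum_congr fun k => by ring
end

section
/- For the Bolthausen-Sznitman coalescent, the limiting distribution of the number of blocks in the last coalescence satisfies, for j ≥ 2: P̃_{1j} = (1/(j-1)) ∫_0^1 x^{j-1}/(-log(1-x)) dx = (1/(j-1)) Σ_{k=1}^{j-1} C(j-1, k) (-1)^{k+1} log(k+1). -/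
open Real

open MeasureTheory


private lemma aux_bound (k : ℕ) {u : ℝ} (hu : u ∈ Set.Ioo (0:ℝ) 1) :
    |(u ^ k - 1) / Real.log u| ≤ k := by
  obtain ⟨h0, h1⟩ := hu
  have hlog : Real.log u < 0 := Real.log_neg h0 h1
  have h2 : 1 - u ≤ -Real.log u := by
    have := Real.log_le_sub_one_of_pos h0; linarith
  have hs : (∑ i ∈ Finset.range k, u ^ i) ≤ k := by
    calc (∑ i ∈ Finset.range k, u ^ i) ≤ ∑ _i ∈ Finset.range k, (1:ℝ) := by
          apply Finset.sum_le_sum; intro i _; exact pow_le_one₀ h0.le h1.le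
      _ = k := by simp
  have h3 : 1 - u ^ k ≤ k * (1 - u) := by
    have hg := geom_sum_mul u k
    nlinarith [Finset.sum_nonneg (fun i (_ : i ∈ Finset.range k) => pow_nonneg h0.le i)]
  have hu1 : u ^ k ≤ 1 := pow_le_one₀ h0.le h1.le
  rw [abs_div, abs_of_neg hlog, abs_of_nonpos (by linarith : u ^ k - 1 ≤ 0),
    div_le_iff₀ (by linarith : (0:ℝ) < -Real.log u)]
  nlinarith [Nat.cast_nonneg (α := ℝ) k]

private lemma aux_integrable (k : ℕ) :
    IntegrableOn (fun x => ((1 - x) ^ k - 1) / Real.log (1 - x)) (Set.Ioo (0:ℝ) 1) volume := by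
  have hmeas : Measurable (fun x : ℝ => ((1 - x) ^ k - 1) / Real.log (1 - x)) := by
    apply Measurable.div
    · fun_prop
    · exact Real.measurable_log.comp (measurable_const.sub measurable_id)
  apply Integrable.mono' (g := fun _ => (k:ℝ)) (integrable_const _) hmeas.aestronglyMeasurable
  rw [ae_restrict_iff' measurableSet_Ioo]
  filter_upwards with x hx
  have hmem : (1 - x) ∈ Set.Ioo (0:ℝ) 1 := ⟨by linarith [hx.2], by linarith [hx.1]⟩
  rw [Real.norm_eq_abs]
  exact aux_bound k hmem

private lemma aux_exp_int (c : ℝ) (hc : c ≠ 0) (k : ℝ) :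
    ∫ t in (0:ℝ)..k, Real.exp (t * c) = (Real.exp (k * c) - 1) / c := by
  have h : ∀ t ∈ Set.uIcc (0:ℝ) k,
      HasDerivAt (fun t => Real.exp (t * c) / c) (Real.exp (t * c)) t := by
    intro t _
    have h1 : HasDerivAt (fun t : ℝ => t * c) c t := by
      simpa using (hasDerivAt_id t).mul_const c
    have h2 := (Real.hasDerivAt_exp (t * c)).comp t h1
    have h3 := h2.div_const c
    simpa [mul_div_assoc, mul_div_cancel_right₀ _ hc] using h3
  rw [intervalIntegral.integral_eq_sub_of_hasDerivAt h
    ((Real.continuous_exp.comp (continuous_id.mul continuous_const)).intervalIntegrable 0 k)]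
  rw [sub_div]
  norm_num

private lemma aux_int (k : ℕ) :
    ∫ x in Set.Ioo (0:ℝ) 1, ((1 - x) ^ k - 1) / Real.log (1 - x) = Real.log ((k:ℝ) + 1) := by
  set f : ℝ → ℝ → ℝ := fun t x => Real.exp (t * Real.log (1 - x)) with hf
  have hint : Integrable (Function.uncurry f)
      ((volume.restrict (Set.Ioc (0:ℝ) (k:ℝ))).prod (volume.restrict (Set.Ioo (0:ℝ) 1))) := by
    have hmeas : Measurable (Function.uncurry f) := by
      apply Real.measurable_exp.comp
      exact measurable_fst.mul
        (Real.measurable_log.comp (measurable_const.sub measurable_snd))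
    apply Integrable.mono' (g := fun _ => (1:ℝ)) ?_ hmeas.aestronglyMeasurable
    · rw [MeasureTheory.Measure.prod_restrict, ae_restrict_iff' (measurableSet_Ioc.prod measurableSet_Ioo)]
      filter_upwards with p hp
      obtain ⟨ht, hx⟩ := hp
      have h1x : (0:ℝ) < 1 - p.2 := by linarith [hx.2]
      have hlog : Real.log (1 - p.2) < 0 := Real.log_neg h1x (by linarith [hx.1])
      have : p.1 * Real.log (1 - p.2) ≤ 0 := mul_nonpos_of_nonneg_of_nonpos ht.1.le hlog.le
      simp only [Function.uncurry, hf, Real.norm_eq_abs, abs_of_pos (Real.exp_pos _)]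
      exact Real.exp_le_one_iff.mpr this
    · haveI : IsFiniteMeasure (volume.restrict (Set.Ioc (0:ℝ) (k:ℝ))) :=
        ⟨by simp [Real.volume_Ioc]⟩
      haveI : IsFiniteMeasure (volume.restrict (Set.Ioo (0:ℝ) 1)) :=
        ⟨by simp [Real.volume_Ioo]⟩
      exact integrable_const _
  have hswap := MeasureTheory.integral_integral_swap hint
  have hR : (∫ x in Set.Ioo (0:ℝ) 1, ∫ t in Set.Ioc (0:ℝ) (k:ℝ), f t x)
      = ∫ x in Set.Ioo (0:ℝ) 1, ((1 - x) ^ k - 1) / Real.log (1 - x) := by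
    apply setIntegral_congr_fun measurableSet_Ioo
    intro x hx
    dsimp only
    have h1x : (0:ℝ) < 1 - x := by linarith [hx.2]
    have hc : Real.log (1 - x) ≠ 0 := ne_of_lt (Real.log_neg h1x (by linarith [hx.1]))
    rw [← intervalIntegral.integral_of_le (by positivity : (0:ℝ) ≤ (k:ℝ))]
    rw [aux_exp_int _ hc, Real.exp_nat_mul, Real.exp_log h1x]
  have hL : (∫ t in Set.Ioc (0:ℝ) (k:ℝ), ∫ x in Set.Ioo (0:ℝ) 1, f t x)
      = Real.log ((k:ℝ) + 1) := by
    have h1 : ∀ t ∈ Set.Ioc (0:ℝ) (k:ℝ),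
        (∫ x in Set.Ioo (0:ℝ) 1, f t x) = 1 / (t + 1) := by
      intro t ht
      have he : (∫ x in Set.Ioo (0:ℝ) 1, f t x)
          = ∫ x in Set.Ioo (0:ℝ) 1, (1 - x) ^ t := by
        apply setIntegral_congr_fun measurableSet_Ioo
        intro x hx
        dsimp only
        rw [Real.rpow_def_of_pos (by linarith [hx.2] : (0:ℝ) < 1 - x), mul_comm]
      rw [he, ← MeasureTheory.integral_Ioc_eq_integral_Ioo,
        ← intervalIntegral.integral_of_le zero_le_one]
      have hcomp := intervalIntegral.integral_comp_sub_left (a := (0:ℝ)) (b := 1)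
        (fun u : ℝ => u ^ t) 1
      norm_num at hcomp
      rw [hcomp, integral_rpow (Or.inl (by linarith [ht.1] : (-1:ℝ) < t)),
        Real.one_rpow, Real.zero_rpow (by linarith [ht.1] : t + 1 ≠ 0)]
      norm_num
    rw [setIntegral_congr_fun measurableSet_Ioc h1,
      ← intervalIntegral.integral_of_le (by positivity : (0:ℝ) ≤ (k:ℝ))]
    have hcomp := intervalIntegral.integral_comp_add_right (a := (0:ℝ)) (b := (k:ℝ))
      (fun u : ℝ => 1 / u) 1
    simp only [zero_add] at hcomp
    have h0 : (0:ℝ) ∉ Set.uIcc 1 ((k:ℝ) + 1) := by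
      rw [Set.uIcc_of_le (by linarith [Nat.cast_nonneg (α := ℝ) k] : (1:ℝ) ≤ (k:ℝ) + 1)]
      intro h
      exact absurd h.1 (by norm_num)
    rw [hcomp, integral_one_div h0]
    norm_num
  rw [← hR, ← hswap, hL]

private lemma aux_pointwise (m : ℕ) (hm : 1 ≤ m) {x : ℝ} (hx : x ∈ Set.Ioo (0:ℝ) 1) :
    x ^ m / (-Real.log (1 - x)) =
      ∑ k ∈ Finset.Icc 1 m, (m.choose k : ℝ) * (-1) ^ (k + 1) *
        (((1 - x) ^ k - 1) / Real.log (1 - x)) := by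
  have h1x : (0:ℝ) < 1 - x := by linarith [hx.2]
  have hc : Real.log (1 - x) ≠ 0 := ne_of_lt (Real.log_neg h1x (by linarith [hx.1]))
  have hsub : Finset.Icc 1 m ⊆ Finset.range (m + 1) := by
    intro k hk; simp only [Finset.mem_Icc] at hk; simp only [Finset.mem_range]; omega
  have hzero : ∀ k ∈ Finset.range (m + 1), k ∉ Finset.Icc 1 m →
      (m.choose k : ℝ) * (-1) ^ (k + 1) * ((1 - x) ^ k - 1) = 0 := by
    intro k hk h2
    simp only [Finset.mem_range] at hk
    simp only [Finset.mem_Icc] at h2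
    have : k = 0 := by omega
    subst this; simp
  have hA : ∑ k ∈ Finset.range (m + 1), (-(1 - x)) ^ k * (1:ℝ) ^ (m - k) * (m.choose k)
      = x ^ m := by
    rw [← add_pow]; norm_num
  have hB : ∑ k ∈ Finset.range (m + 1), (-1:ℝ) ^ k * (1:ℝ) ^ (m - k) * (m.choose k) = 0 := by
    rw [← add_pow]; norm_num [zero_pow (by omega : m ≠ 0)]
  have hsum : ∑ k ∈ Finset.Icc 1 m, (m.choose k : ℝ) * (-1) ^ (k + 1) * ((1 - x) ^ k - 1)
      = -(x ^ m) := by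
    rw [Finset.sum_subset hsub hzero]
    calc ∑ k ∈ Finset.range (m + 1), (m.choose k : ℝ) * (-1) ^ (k + 1) * ((1 - x) ^ k - 1)
        = ∑ k ∈ Finset.range (m + 1),
            ((-1:ℝ) ^ k * (1:ℝ) ^ (m - k) * (m.choose k)
              - (-(1 - x)) ^ k * (1:ℝ) ^ (m - k) * (m.choose k)) := by
          apply Finset.sum_congr rfl; intro k _
          have hneg : (-(1 - x)) ^ k = (-1:ℝ) ^ k * (1 - x) ^ k := neg_pow _ _
          rw [hneg, pow_succ]; ring
      _ = 0 - x ^ m := by rw [Finset.sum_sub_distrib, hA, hB]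
      _ = -(x ^ m) := by ring
  have hexp : ∑ k ∈ Finset.Icc 1 m, (m.choose k : ℝ) * (-1) ^ (k + 1) *
        (((1 - x) ^ k - 1) / Real.log (1 - x))
      = (∑ k ∈ Finset.Icc 1 m, (m.choose k : ℝ) * (-1) ^ (k + 1) * ((1 - x) ^ k - 1))
          / Real.log (1 - x) := by
    rw [Finset.sum_div]; apply Finset.sum_congr rfl; intro k _; ring
  rw [hexp, hsum, div_neg, neg_div]


theorem stmt_16 (j : ℕ) (hj : 2 ≤ j) :
    (1 / ((j : ℝ) - 1)) * ∫ x in Set.Ioo (0:ℝ) 1, x ^ (j - 1) / (-Real.log (1 - x)) =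
      (1 / ((j : ℝ) - 1)) *
        ∑ k ∈ Finset.Icc 1 (j - 1),
          ((j - 1).choose k : ℝ) * (-1) ^ (k + 1) * Real.log ((k : ℝ) + 1) := by

  have hm : 1 ≤ j - 1 := by omega
  set m := j - 1 with hmj
  congr 1
  calc (∫ x in Set.Ioo (0:ℝ) 1, x ^ m / (-Real.log (1 - x)))
      = ∫ x in Set.Ioo (0:ℝ) 1, ∑ k ∈ Finset.Icc 1 m, (m.choose k : ℝ) * (-1) ^ (k + 1) *
          (((1 - x) ^ k - 1) / Real.log (1 - x)) := by
        exact setIntegral_congr_fun measurableSet_Ioo (fun x hx => aux_pointwise m hm hx)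
    _ = ∑ k ∈ Finset.Icc 1 m, ∫ x in Set.Ioo (0:ℝ) 1, (m.choose k : ℝ) * (-1) ^ (k + 1) *
          (((1 - x) ^ k - 1) / Real.log (1 - x)) := by
        apply MeasureTheory.integral_finset_sum
        intro k _
        exact (aux_integrable k).const_mul _
    _ = ∑ k ∈ Finset.Icc 1 m, (m.choose k : ℝ) * (-1) ^ (k + 1) * Real.log ((k : ℝ) + 1) := by
        apply Finset.sum_congr rfl; intro k _
        rw [integral_const_mul, aux_int k]
end

section
/- For j ≥ 2 and α ∈ (1,2), the function h(x) = x/(1-(1-x)^{α-1}) extends continuously to [0,1] with h(1) = 1, and ∫_0^1 x^{j-2}(1-x)^{α-1} h(x) dx ~ Γ(α)·Γ(j-1)/Γ(j-1+α) as j → ∞. Consequently, the limiting hitting probability P(j ∈ R) = (Γ(j-1+α)/(Γ(α)Γ(j-1))) · (α-1) ∫_0^1 x^{j-1}(1-x)^{α-1}/(1-(1-x)^{α-1}) dx converges to α - 1 as j → ∞. -/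
/-!
The weight `x ^ n * (1 - x) ^ (α - 1)` on `(0, 1)`, whose total mass is the Beta integral
`Γ(n + 1) Γ(α) / Γ(n + 1 + α)`, concentrates at `x = 1` as `n → ∞`: its mass on `(0, t)` is at most
`t ^ n`, while its total mass is at least `c * s ^ n` for any `s ∈ (t, 1)`. Hence its normalized
average of any function continuous on `[0, 1]` tends to the value at `1`. The function
`h x = x / (1 - (1 - x) ^ (α - 1))` is such a function: it is the inverse difference quotient at `0`
of `1 - (1 - x) ^ (α - 1)`, whose derivative there is `α - 1 ≠ 0`, and `h 1 = 1`. The last limit is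
`α - 1` times the second one, since `x ^ (j - 1) / (1 - (1 - x) ^ (α - 1)) = x ^ (j - 2) * h x`.
-/

open Real Filter MeasureTheory Set Topology

theorem integral_rpow_mul_one_sub_rpow_eq_beta {a b : ℝ} (ha : 0 < a) (hb : 0 < b) :
    ∫ x in Ioo (0 : ℝ) 1, x ^ (a - 1) * (1 - x) ^ (b - 1) = ProbabilityTheory.beta a b := by
  rw [ProbabilityTheory.beta_eq_betaIntegralReal a b ha hb, Complex.betaIntegral,
    intervalIntegral.integral_of_le zero_le_one, ← integral_Ioc_eq_integral_Ioo,
    ← RCLike.re_to_complex, ← integral_re]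
  · refine setIntegral_congr_fun measurableSet_Ioc fun x ⟨hx0, hx1⟩ ↦ ?_
    norm_cast
    rw [← Complex.ofReal_cpow hx0.le, ← Complex.ofReal_cpow (sub_nonneg.2 hx1)]
    norm_cast
  · have := Complex.betaIntegral_convergent (u := a) (v := b) (by simpa) (by simpa)
    rwa [intervalIntegrable_iff_integrableOn_Ioc_of_le zero_le_one] at this

theorem integral_pow_mul_one_sub_rpow_eq_beta (n : ℕ) {b : ℝ} (hb : 0 < b) :
    ∫ x in Ioo (0 : ℝ) 1, x ^ n * (1 - x) ^ (b - 1) = ProbabilityTheory.beta (n + 1) b := by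
  rw [← integral_rpow_mul_one_sub_rpow_eq_beta (by positivity) hb]
  simp_rw [add_sub_cancel_right, rpow_natCast]

section Concentration

variable {β : ℝ}

theorem continuous_one_sub_rpow (hβ : 0 ≤ β) : Continuous fun x : ℝ ↦ (1 - x) ^ β :=
  (continuous_const.sub continuous_id).rpow_const fun _ ↦ Or.inr hβ

theorem integrableOn_pow_mul_one_sub_rpow_mul (hβ : 0 ≤ β) (n : ℕ) {H : ℝ → ℝ}
    (hH : ContinuousOn H (Icc 0 1)) :
    IntegrableOn (fun x : ℝ ↦ x ^ n * (1 - x) ^ β * H x) (Ioo 0 1) :=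
  ((((continuous_pow n).mul (continuous_one_sub_rpow hβ)).continuousOn.mul hH).integrableOn_Icc
    ).mono_set Ioo_subset_Icc_self

theorem integrableOn_pow_mul_one_sub_rpow (hβ : 0 ≤ β) (n : ℕ) :
    IntegrableOn (fun x : ℝ ↦ x ^ n * (1 - x) ^ β) (Ioo 0 1) := by
  simpa using integrableOn_pow_mul_one_sub_rpow_mul hβ n (H := fun _ ↦ 1) continuousOn_const

theorem pow_mul_one_sub_rpow_le_pow (hβ : 0 ≤ β) (n : ℕ) {x t : ℝ} (hx0 : 0 ≤ x) (hxt : x ≤ t)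
    (hx1 : x ≤ 1) : x ^ n * (1 - x) ^ β ≤ t ^ n :=
  (mul_le_of_le_one_right (pow_nonneg hx0 n) (rpow_le_one (by linarith) (by linarith) hβ)).trans
    (pow_le_pow_left₀ hx0 hxt n)

theorem exists_pos_forall_mul_pow_le_integral_pow_mul_one_sub_rpow (hβ : 0 ≤ β) {s : ℝ}
    (hs0 : 0 < s) (hs1 : s < 1) :
    ∃ c > 0, ∀ n : ℕ, c * s ^ n ≤ ∫ x in Ioo 0 1, x ^ n * (1 - x) ^ β := by
  set r := (1 - s) / 2 with hr
  have hr0 : 0 < r := by linarith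
  have hsub : Ioo s (s + r) ⊆ Ioo 0 1 := Ioo_subset_Ioo hs0.le (by linarith)
  refine ⟨r ^ β * r, by positivity, fun n ↦ ?_⟩
  calc r ^ β * r * s ^ n = s ^ n * r ^ β * volume.real (Ioo s (s + r)) := by
        rw [volume_real_Ioo_of_le (by linarith), add_sub_cancel_left]; ring
    _ ≤ ∫ x in Ioo s (s + r), x ^ n * (1 - x) ^ β := by
        refine setIntegral_ge_of_const_le_real measurableSet_Ioo measure_Ioo_lt_top.ne
          (fun x hx ↦ ?_) ((integrableOn_pow_mul_one_sub_rpow hβ n).mono_set hsub)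
        exact mul_le_mul (pow_le_pow_left₀ hs0.le hx.1.le n)
          (rpow_le_rpow hr0.le (by linarith [hx.2]) hβ) (by positivity)
          (pow_nonneg (by linarith [hx.1]) n)
    _ ≤ ∫ x in Ioo 0 1, x ^ n * (1 - x) ^ β :=
        setIntegral_mono_set (integrableOn_pow_mul_one_sub_rpow hβ n)
          (ae_restrict_of_forall_mem measurableSet_Ioo fun x hx ↦
            mul_nonneg (pow_nonneg hx.1.le n) (rpow_nonneg (by linarith [hx.2]) β))
          hsub.eventuallyLE

theorem abs_integral_pow_mul_one_sub_rpow_mul_sub_le (hβ : 0 ≤ β) (n : ℕ) {H : ℝ → ℝ}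
    (hH : ContinuousOn H (Icc 0 1)) {t M ε : ℝ} (ht0 : 0 ≤ t) (ht1 : t ≤ 1)
    (hM : ∀ x ∈ Icc 0 1, |H x - H 1| ≤ M) (hε : ∀ x ∈ Icc t 1, |H x - H 1| ≤ ε) :
    |(∫ x in Ioo 0 1, x ^ n * (1 - x) ^ β * H x) - H 1 * ∫ x in Ioo 0 1, x ^ n * (1 - x) ^ β|
      ≤ M * t ^ n + ε * ∫ x in Ioo 0 1, x ^ n * (1 - x) ^ β := by
  have hw := integrableOn_pow_mul_one_sub_rpow hβ n
  have hconst : IntegrableOn (fun _ : ℝ ↦ M * t ^ n) (Ioo 0 1) :=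
    integrableOn_const measure_Ioo_lt_top.ne
  have hM0 : 0 ≤ M := (abs_nonneg _).trans (hM 1 ⟨zero_le_one, le_rfl⟩)
  have hε0 : 0 ≤ ε := (abs_nonneg _).trans (hε 1 ⟨ht1, le_rfl⟩)
  have hbound : ∀ x ∈ Ioo (0 : ℝ) 1,
      ‖x ^ n * (1 - x) ^ β * (H x - H 1)‖ ≤ M * t ^ n + ε * (x ^ n * (1 - x) ^ β) := by
    intro x ⟨hx0, hx1⟩
    have hw0 : 0 ≤ x ^ n * (1 - x) ^ β :=
      mul_nonneg (pow_nonneg hx0.le n) (rpow_nonneg (by linarith) β)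
    have htn : 0 ≤ M * t ^ n := mul_nonneg hM0 (pow_nonneg ht0 n)
    rw [Real.norm_eq_abs, abs_mul, abs_of_nonneg hw0]
    rcases lt_or_ge x t with hxt | hxt
    · calc x ^ n * (1 - x) ^ β * |H x - H 1| ≤ t ^ n * M :=
            mul_le_mul (pow_mul_one_sub_rpow_le_pow hβ n hx0.le hxt.le hx1.le)
              (hM x ⟨hx0.le, hx1.le⟩) (abs_nonneg _) (pow_nonneg ht0 n)
        _ ≤ M * t ^ n + ε * (x ^ n * (1 - x) ^ β) := by nlinarith [mul_nonneg hε0 hw0]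
    · calc x ^ n * (1 - x) ^ β * |H x - H 1| ≤ x ^ n * (1 - x) ^ β * ε :=
            mul_le_mul_of_nonneg_left (hε x ⟨hxt, hx1.le⟩) hw0
        _ ≤ M * t ^ n + ε * (x ^ n * (1 - x) ^ β) := by linarith
  calc |(∫ x in Ioo 0 1, x ^ n * (1 - x) ^ β * H x) - H 1 * ∫ x in Ioo 0 1, x ^ n * (1 - x) ^ β|
      = ‖∫ x in Ioo 0 1, x ^ n * (1 - x) ^ β * (H x - H 1)‖ := by
        simp_rw [mul_sub]
        rw [integral_sub (integrableOn_pow_mul_one_sub_rpow_mul hβ n hH) (hw.mul_const _),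
          integral_mul_const, mul_comm, Real.norm_eq_abs]
    _ ≤ ∫ x in Ioo 0 1, (M * t ^ n + ε * (x ^ n * (1 - x) ^ β)) :=
        norm_integral_le_of_norm_le (hconst.add (hw.const_mul ε))
          (ae_restrict_of_forall_mem measurableSet_Ioo hbound)
    _ = M * t ^ n + ε * ∫ x in Ioo 0 1, x ^ n * (1 - x) ^ β := by
        rw [integral_add hconst (hw.const_mul ε), setIntegral_const, integral_const_mul,
          volume_real_Ioo_of_le zero_le_one]
        simp

theorem tendsto_integral_pow_mul_one_sub_rpow_mul_div (hβ : 0 ≤ β) {H : ℝ → ℝ}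
    (hH : ContinuousOn H (Icc 0 1)) :
    Tendsto (fun n : ℕ ↦ (∫ x in Ioo 0 1, x ^ n * (1 - x) ^ β * H x) /
      ∫ x in Ioo 0 1, x ^ n * (1 - x) ^ β) atTop (𝓝 (H 1)) := by
  obtain ⟨M, hM⟩ : ∃ M, ∀ x ∈ Icc (0 : ℝ) 1, |H x - H 1| ≤ M :=
    isCompact_Icc.exists_bound_of_continuousOn (hH.sub continuousOn_const)
  have hM0 : 0 ≤ M := (abs_nonneg _).trans (hM 1 ⟨zero_le_one, le_rfl⟩)
  refine Metric.tendsto_nhds.2 fun ε hε ↦ ?_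
  obtain ⟨t, ht0, ht1, hnear⟩ : ∃ t, 0 ≤ t ∧ t < 1 ∧ ∀ x ∈ Icc t 1, |H x - H 1| ≤ ε / 2 := by
    obtain ⟨δ, hδ0, hδ⟩ :=
      Metric.continuousWithinAt_iff.1 (hH 1 ⟨zero_le_one, le_rfl⟩) (ε / 2) (half_pos hε)
    refine ⟨max (1 - δ / 2) 0, le_max_right _ _, max_lt (by linarith) zero_lt_one,
      fun x hx ↦ ?_⟩
    have hx0 : 0 ≤ x := (le_max_right _ _).trans hx.1
    have hxδ : dist x 1 < δ := by
      rw [Real.dist_eq, abs_of_nonpos (by linarith [hx.2])]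
      linarith [le_max_left (1 - δ / 2) 0, hx.1]
    exact (hδ ⟨hx0, hx.2⟩ hxδ).le
  obtain ⟨s, hts, hs1⟩ : ∃ s, t < s ∧ s < 1 := ⟨(1 + t) / 2, by linarith, by linarith⟩
  have hs0 : 0 < s := ht0.trans_lt hts
  obtain ⟨c, hc, hB⟩ := exists_pos_forall_mul_pow_le_integral_pow_mul_one_sub_rpow hβ hs0 hs1
  have hsmall : Tendsto (fun n : ℕ ↦ M / c * (t / s) ^ n) atTop (𝓝 0) := by
    simpa using (tendsto_pow_atTop_nhds_zero_of_lt_one (by positivity)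
      ((div_lt_one hs0).2 hts)).const_mul (M / c)
  filter_upwards [hsmall.eventually_lt_const (half_pos hε)] with n hn
  set B : ℝ := ∫ x in Ioo 0 1, x ^ n * (1 - x) ^ β
  have hB0 : 0 < B := lt_of_lt_of_le (by positivity) (hB n)
  calc dist ((∫ x in Ioo 0 1, x ^ n * (1 - x) ^ β * H x) / B) (H 1)
      = |(∫ x in Ioo 0 1, x ^ n * (1 - x) ^ β * H x) - H 1 * B| / B := by
        rw [Real.dist_eq, div_sub' hB0.ne', abs_div, abs_of_pos hB0, mul_comm]
    _ ≤ (M * t ^ n + ε / 2 * B) / B := by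
        gcongr
        exact abs_integral_pow_mul_one_sub_rpow_mul_sub_le hβ n hH ht0 ht1.le hM hnear
    _ = M * t ^ n / B + ε / 2 := by field_simp
    _ ≤ M * t ^ n / (c * s ^ n) + ε / 2 := by gcongr; exact hB n
    _ = M / c * (t / s) ^ n + ε / 2 := by rw [div_pow, div_mul_div_comm]
    _ < ε := by linarith

theorem tendsto_integral_pow_sub_two_mul_one_sub_rpow_mul_div_Gamma {α : ℝ} (hα : 1 < α)
    {H : ℝ → ℝ} (hH : ContinuousOn H (Icc 0 1)) :
    Tendsto (fun j : ℕ ↦ (∫ x in Ioo 0 1, x ^ (j - 2) * (1 - x) ^ (α - 1) * H x) /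
      (Gamma α * Gamma ((j : ℝ) - 1) / Gamma ((j : ℝ) - 1 + α))) atTop (𝓝 (H 1)) := by
  refine ((tendsto_integral_pow_mul_one_sub_rpow_mul_div (sub_pos.2 hα).le hH).comp
    (tendsto_sub_atTop_nat 2)).congr' ?_
  filter_upwards [eventually_ge_atTop 2] with j hj
  rw [Function.comp_apply, integral_pow_mul_one_sub_rpow_eq_beta _ (by linarith),
    ProbabilityTheory.beta, mul_comm (Gamma _),
    show ((j - 2 : ℕ) : ℝ) + 1 = j - 1 by push_cast [Nat.cast_sub hj]; ring]

end Concentration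

section HitRatio

variable {β : ℝ}

/-- The paper's `h` for `β = α - 1`. As an inverse difference quotient, its value at the removable
singularity `0` is the inverse derivative `β⁻¹`. -/
noncomputable def hitRatio (β : ℝ) (x : ℝ) : ℝ := (dslope (fun y ↦ 1 - (1 - y) ^ β) 0 x)⁻¹

theorem hitRatio_of_ne_zero {x : ℝ} (hx : x ≠ 0) : hitRatio β x = x / (1 - (1 - x) ^ β) := by
  simp [hitRatio, dslope_of_ne _ hx, slope_def_field]

theorem hitRatio_one (hβ : β ≠ 0) : hitRatio β 1 = 1 := by
  simp [hitRatio_of_ne_zero one_ne_zero, zero_rpow hβ]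

theorem hasDerivAt_one_sub_one_sub_rpow_zero :
    HasDerivAt (fun y : ℝ ↦ 1 - (1 - y) ^ β) β 0 := by
  simpa using (((hasDerivAt_id (0 : ℝ)).const_sub 1).rpow_const (p := β) (by simp)).const_sub 1

theorem continuousOn_hitRatio (hβ : 0 < β) : ContinuousOn (hitRatio β) (Icc 0 1) := by
  set g : ℝ → ℝ := fun y ↦ 1 - (1 - y) ^ β
  have hg : HasDerivAt g β 0 := hasDerivAt_one_sub_one_sub_rpow_zero
  have hcont : ContinuousOn (dslope g 0) (Icc 0 1) := fun x _ ↦ by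
    rcases eq_or_ne x 0 with rfl | hx
    · exact (continuousAt_dslope_same.2 hg.differentiableAt).continuousWithinAt
    · exact (continuousWithinAt_dslope_of_ne hx).2
        (continuous_const.sub (continuous_one_sub_rpow hβ.le)).continuousWithinAt
  refine hcont.inv₀ fun x hx ↦ ?_
  rcases eq_or_ne x 0 with rfl | hx0
  · rw [dslope_same, hg.deriv]; exact hβ.ne'
  · have hxpos : 0 < x := lt_of_le_of_ne hx.1 hx0.symm
    have : (1 - x) ^ β < 1 := rpow_lt_one (by linarith [hx.2]) (by linarith) hβ
    rw [dslope_of_ne _ hx0, slope_def_field]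
    simp only [g, sub_zero, one_rpow, sub_self]
    exact (div_pos (by linarith) hxpos).ne'

end HitRatio

theorem stmt_17 (α : ℝ) (hα : α ∈ Set.Ioo (1:ℝ) 2) :
    (∃ H : ℝ → ℝ, ContinuousOn H (Set.Icc 0 1) ∧ H 1 = 1 ∧
      ∀ x ∈ Set.Ioo (0:ℝ) 1, H x = x / (1 - (1 - x) ^ (α - 1))) ∧
    Tendsto (fun j : ℕ =>
        (∫ x in Set.Ioo (0:ℝ) 1,
            x ^ (j - 2) * (1 - x) ^ (α - 1) * (x / (1 - (1 - x) ^ (α - 1)))) /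
          (Real.Gamma α * Real.Gamma ((j : ℝ) - 1) / Real.Gamma ((j : ℝ) - 1 + α)))
      atTop (nhds 1) ∧
    Tendsto (fun j : ℕ =>
        Real.Gamma ((j : ℝ) - 1 + α) / (Real.Gamma α * Real.Gamma ((j : ℝ) - 1)) *
          ((α - 1) * ∫ x in Set.Ioo (0:ℝ) 1,
            x ^ (j - 1) * (1 - x) ^ (α - 1) / (1 - (1 - x) ^ (α - 1))))
      atTop (nhds (α - 1)) := by
  have hβ : 0 < α - 1 := sub_pos.2 hα.1
  have hH : ∀ x ∈ Ioo (0 : ℝ) 1, hitRatio (α - 1) x = x / (1 - (1 - x) ^ (α - 1)) :=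
    fun x hx ↦ hitRatio_of_ne_zero hx.1.ne'
  have hratio := tendsto_integral_pow_sub_two_mul_one_sub_rpow_mul_div_Gamma hα.1
    (continuousOn_hitRatio hβ)
  rw [hitRatio_one hβ.ne'] at hratio
  have hintegral (n : ℕ) :
      ∫ x in Ioo (0 : ℝ) 1, x ^ n * (1 - x) ^ (α - 1) * hitRatio (α - 1) x =
        ∫ x in Ioo (0 : ℝ) 1, x ^ n * (1 - x) ^ (α - 1) * (x / (1 - (1 - x) ^ (α - 1))) :=
    setIntegral_congr_fun measurableSet_Ioo fun x hx ↦ by rw [hH x hx]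
  simp only [hintegral] at hratio
  refine ⟨⟨hitRatio (α - 1), continuousOn_hitRatio hβ, hitRatio_one hβ.ne', hH⟩, hratio, ?_⟩
  have hlim := hratio.const_mul (α - 1)
  rw [mul_one] at hlim
  refine hlim.congr' ?_
  filter_upwards [eventually_ge_atTop 2] with j hj
  have hI : ∫ x in Ioo (0 : ℝ) 1, x ^ (j - 1) * (1 - x) ^ (α - 1) / (1 - (1 - x) ^ (α - 1)) =
      ∫ x in Ioo (0 : ℝ) 1, x ^ (j - 2) * (1 - x) ^ (α - 1) * (x / (1 - (1 - x) ^ (α - 1))) :=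
    integral_congr_ae <| ae_of_all _ fun x ↦ by
      dsimp only; rw [show j - 1 = j - 2 + 1 by omega, pow_succ]; ring
  rw [hI, div_div_eq_mul_div]
  ring
end

section
/- For α ∈ (0,1), the quantity P(j ∈ R) := (Γ(j-1+α)/(Γ(α)Γ(j-1))) ∫_0^1 x^{j-1} (1-α)/(1-(1-x)^{1-α}) dx satisfies P(j ∈ R) ~ ((1-α)/Γ(α)) · j^{α-1} as j → ∞. -/
/-! Wendel's inequalities `(x / (x + a)) ^ (1 - a) ≤ Γ(x + a) / (Γ(x) x ^ a) ≤ 1`, both instances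
of the log-convexity of `Γ`, give `Γ(j - 1 + α) ~ Γ(j - 1) j ^ α`. The substitution `t = u ^ (1/(n+1))`
turns `(n + 1) ∫₀¹ tⁿ h(t) dt` into `∫₀¹ h(u ^ (1/(n+1))) du`, which tends to `h(1⁻)` by dominated
convergence; for `h(t) = (1 - α) t / (1 - (1 - t) ^ (1 - α))` Bernoulli's inequality gives `0 ≤ h ≤ 1`. -/

open Real Filter MeasureTheory

open Set Topology

namespace Real

theorem Gamma_add_le_Gamma_mul_rpow {x a : ℝ} (hx : 0 < x) (ha₀ : 0 < a) (ha₁ : a < 1) :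
    Gamma (x + a) ≤ Gamma x * x ^ a := by
  have hΓ := Gamma_pos_of_pos hx
  have h := Gamma_mul_add_mul_le_rpow_Gamma_mul_rpow_Gamma hx (by linarith : 0 < x + 1)
    (sub_pos.2 ha₁) ha₀ (sub_add_cancel 1 a)
  calc Gamma (x + a) = Gamma ((1 - a) * x + a * (x + 1)) := by ring_nf
    _ ≤ Gamma x ^ (1 - a) * Gamma (x + 1) ^ a := h
    _ = Gamma x * x ^ a := by
      rw [Gamma_add_one hx.ne', mul_comm x, mul_rpow hΓ.le hx.le, ← mul_assoc, ← rpow_add hΓ,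
        sub_add_cancel, rpow_one]

theorem one_add_mul_inv_rpow_le_Gamma_add_div {x a : ℝ} (hx : 0 < x) (ha₀ : 0 < a) (ha₁ : a < 1) :
    (1 + a * x⁻¹) ^ (a - 1) ≤ Gamma (x + a) / (Gamma x * x ^ a) := by
  have hxa : 0 < x + a := by linarith
  have h := Gamma_add_le_Gamma_mul_rpow hxa (sub_pos.2 ha₁) (sub_lt_self 1 ha₀)
  rw [add_add_sub_cancel, Gamma_add_one hx.ne'] at h
  have hrpow : (1 + a * x⁻¹) ^ (a - 1) = (x + a) ^ (a - 1) * x / x ^ a := by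
    rw [show 1 + a * x⁻¹ = (x + a) / x by field_simp, div_rpow hxa.le hx.le, rpow_sub_one hx.ne']
    field_simp
  rw [hrpow, le_div_iff₀ (mul_pos (Gamma_pos_of_pos hx) (rpow_pos_of_pos hx a))]
  calc (x + a) ^ (a - 1) * x / x ^ a * (Gamma x * x ^ a)
      = (x + a) ^ (a - 1) * (x * Gamma x) := by field_simp
    _ ≤ (x + a) ^ (a - 1) * (Gamma (x + a) * (x + a) ^ (1 - a)) := by gcongr
    _ = Gamma (x + a) := by
      rw [mul_left_comm, ← rpow_add hxa, sub_add_sub_cancel, sub_self, rpow_zero, mul_one]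

theorem tendsto_Gamma_add_div_Gamma_mul_rpow {a : ℝ} (ha₀ : 0 < a) (ha₁ : a < 1) :
    Tendsto (fun x => Gamma (x + a) / (Gamma x * x ^ a)) atTop (𝓝 1) := by
  have hlower : Tendsto (fun x : ℝ => (1 + a * x⁻¹) ^ (a - 1)) atTop (𝓝 1) := by
    have h := (tendsto_inv_atTop_zero.const_mul a).const_add 1
    rw [mul_zero, add_zero] at h
    simpa using h.rpow_const (Or.inl one_ne_zero)
  refine tendsto_of_tendsto_of_tendsto_of_le_of_le' hlower tendsto_const_nhds
    ((eventually_gt_atTop 0).mono fun x hx => one_add_mul_inv_rpow_le_Gamma_add_div hx ha₀ ha₁)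
    ((eventually_gt_atTop 0).mono fun x hx => ?_)
  rw [div_le_one (mul_pos (Gamma_pos_of_pos hx) (rpow_pos_of_pos hx a))]
  exact Gamma_add_le_Gamma_mul_rpow hx ha₀ ha₁

end Real

theorem image_pow_Ioo_zero_one {n : ℕ} (hn : n ≠ 0) :
    (fun t : ℝ => t ^ n) '' Ioo 0 1 = Ioo 0 1 := by
  ext u
  constructor
  · rintro ⟨t, ⟨ht₀, ht₁⟩, rfl⟩
    exact ⟨pow_pos ht₀ n, pow_lt_one₀ ht₀.le ht₁ hn⟩
  · rintro ⟨hu₀, hu₁⟩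
    exact ⟨u ^ (n⁻¹ : ℝ), ⟨rpow_pos_of_pos hu₀ _, rpow_lt_one hu₀.le hu₁ (by positivity)⟩,
      rpow_inv_natCast_pow hu₀.le hn⟩

theorem mul_integral_Ioo_pow_mul (h : ℝ → ℝ) (n : ℕ) :
    ((n : ℝ) + 1) * ∫ t in Ioo (0 : ℝ) 1, t ^ n * h t
      = ∫ u in Ioo (0 : ℝ) 1, h (u ^ ((n + 1 : ℕ)⁻¹ : ℝ)) := by
  have hderiv : ∀ t ∈ Ioo (0 : ℝ) 1,
      HasDerivWithinAt (fun t : ℝ => t ^ (n + 1)) (((n + 1 : ℕ) : ℝ) * t ^ n) (Ioo 0 1) t :=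
    fun t _ => (hasDerivAt_pow (n + 1) t).hasDerivWithinAt
  have hinj : InjOn (fun t : ℝ => t ^ (n + 1)) (Ioo 0 1) :=
    ((pow_left_strictMonoOn₀ n.succ_ne_zero).mono fun t ht => le_of_lt ht.1).injOn
  conv_rhs => rw [← image_pow_Ioo_zero_one n.succ_ne_zero,
    integral_image_eq_integral_abs_deriv_smul measurableSet_Ioo hderiv hinj]
  rw [← integral_const_mul]
  refine setIntegral_congr_fun measurableSet_Ioo fun t ht => ?_
  have ht₀ := ht.1.le
  rw [smul_eq_mul, pow_rpow_inv_natCast ht₀ n.succ_ne_zero, abs_of_nonneg (by positivity)]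
  push_cast
  ring

theorem tendsto_mul_integral_Ioo_pow_mul {h : ℝ → ℝ} {C L : ℝ} (hmeas : Measurable h)
    (hbdd : ∀ t ∈ Ioo (0 : ℝ) 1, |h t| ≤ C) (hlim : Tendsto h (𝓝[<] 1) (𝓝 L)) :
    Tendsto (fun n : ℕ => ((n : ℝ) + 1) * ∫ t in Ioo (0 : ℝ) 1, t ^ n * h t) atTop (𝓝 L) := by
  simp_rw [mul_integral_Ioo_pow_mul]
  have hL : ∫ _ in Ioo (0 : ℝ) 1, L = L := by simp
  rw [← hL]
  refine tendsto_integral_of_dominated_convergence (fun _ => C)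
    (fun n => (hmeas.comp (measurable_id.pow_const _)).aestronglyMeasurable)
    (integrableOn_const (by simp)) (fun n => ?_) ?_
  all_goals rw [ae_restrict_iff' measurableSet_Ioo]
  all_goals refine ae_of_all _ fun u hu => ?_
  · have hroot : 0 < ((n + 1 : ℕ)⁻¹ : ℝ) := by positivity
    exact hbdd _ ⟨rpow_pos_of_pos hu.1 _, rpow_lt_one hu.1.le hu.2 hroot⟩
  · refine hlim.comp (tendsto_nhdsWithin_iff.2 ⟨?_, Eventually.of_forall fun n =>
      rpow_lt_one hu.1.le hu.2 (by positivity)⟩)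
    have hexp : Tendsto (fun n : ℕ => ((n + 1 : ℕ)⁻¹ : ℝ)) atTop (𝓝 0) :=
      (tendsto_add_atTop_iff_nat 1).2 tendsto_inv_atTop_nhds_zero_nat
    simpa [Function.comp_def] using (continuousAt_const_rpow hu.1.ne').tendsto.comp hexp

theorem mul_le_one_sub_one_sub_rpow {b t : ℝ} (hb₀ : 0 ≤ b) (hb₁ : b ≤ 1) (ht : t ≤ 1) :
    b * t ≤ 1 - (1 - t) ^ b := by
  have h := rpow_one_add_le_one_add_mul_self (s := -t) (by linarith) hb₀ hb₁
  rw [← sub_eq_add_neg] at h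
  linarith

noncomputable def bernoulliRatio (b t : ℝ) : ℝ := b * t / (1 - (1 - t) ^ b)

theorem measurable_bernoulliRatio (b : ℝ) : Measurable (bernoulliRatio b) := by
  unfold bernoulliRatio
  fun_prop

theorem abs_bernoulliRatio_le_one {b t : ℝ} (hb₀ : 0 < b) (hb₁ : b ≤ 1) (ht : t ∈ Ioo (0 : ℝ) 1) :
    |bernoulliRatio b t| ≤ 1 := by
  have hnum : 0 < b * t := mul_pos hb₀ ht.1
  have hle := mul_le_one_sub_one_sub_rpow hb₀.le hb₁ ht.2.le
  rw [bernoulliRatio, abs_of_nonneg (div_nonneg hnum.le (hnum.trans_le hle).le),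
    div_le_one (hnum.trans_le hle)]
  exact hle

theorem tendsto_bernoulliRatio_one {b : ℝ} (hb : 0 < b) :
    Tendsto (bernoulliRatio b) (𝓝 1) (𝓝 b) := by
  have hcont : ContinuousAt (bernoulliRatio b) 1 := by
    refine (continuousAt_const.mul continuousAt_id).div (continuousAt_const.sub ?_) ?_
    · exact ((continuous_rpow_const hb.le).comp (continuous_const.sub continuous_id)).continuousAt
    · simp [zero_rpow hb.ne']
  simpa [bernoulliRatio, zero_rpow hb.ne'] using hcont.tendsto

theorem tendsto_mul_integral_Ioo_pow_mul_bernoulliRatio {b : ℝ} (hb₀ : 0 < b) (hb₁ : b ≤ 1) :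
    Tendsto (fun n : ℕ => ((n : ℝ) + 1) * ∫ t in Ioo (0 : ℝ) 1, t ^ n * bernoulliRatio b t)
      atTop (𝓝 b) :=
  tendsto_mul_integral_Ioo_pow_mul (measurable_bernoulliRatio b)
    (fun _ ht => abs_bernoulliRatio_le_one hb₀ hb₁ ht)
    ((tendsto_bernoulliRatio_one hb₀).mono_left nhdsWithin_le_nhds)

theorem tendsto_natCast_add_div_add_rpow (a b p : ℝ) :
    Tendsto (fun n : ℕ => (((n : ℝ) + a) / ((n : ℝ) + b)) ^ p) atTop (𝓝 1) := by
  have h := (tendsto_add_mul_div_add_mul_atTop_nhds a b (1 : ℝ) one_ne_zero).rpow_const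
    (p := p) (Or.inl (div_ne_zero one_ne_zero one_ne_zero))
  simpa [add_comm] using h

theorem stmt_18 (α : ℝ) (hα : α ∈ Set.Ioo (0:ℝ) 1) :
    Tendsto (fun j : ℕ =>
        (Real.Gamma ((j : ℝ) - 1 + α) / (Real.Gamma α * Real.Gamma ((j : ℝ) - 1)) *
          ∫ x in Set.Ioo (0:ℝ) 1, x ^ (j - 1) * (1 - α) / (1 - (1 - x) ^ (1 - α))) /
        ((1 - α) / Real.Gamma α * (j : ℝ) ^ (α - 1)))
      atTop (nhds 1) := by
  obtain ⟨hα₀, hα₁⟩ := hα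
  have hβ : 0 < 1 - α := sub_pos.2 hα₁
  have hGamma : Tendsto (fun n : ℕ => Gamma ((n : ℝ) + 1 + α) /
      (Gamma ((n : ℝ) + 1) * ((n : ℝ) + 1) ^ α)) atTop (𝓝 1) :=
    (tendsto_Gamma_add_div_Gamma_mul_rpow hα₀ hα₁).comp
      (tendsto_atTop_add_const_right _ 1 tendsto_natCast_atTop_atTop)
  have hIntegral := tendsto_mul_integral_Ioo_pow_mul_bernoulliRatio hβ (sub_le_self 1 hα₀.le)
  have hlim := (hGamma.mul (hIntegral.div_const (1 - α))).mul
    (tendsto_natCast_add_div_add_rpow 1 2 (α - 1))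
  rw [div_self hβ.ne', one_mul, one_mul] at hlim
  -- reindexing by `j = n + 2` removes the truncated subtraction `j - 1`
  rw [← tendsto_add_atTop_iff_nat 2]
  refine hlim.congr fun n => ?_
  have hx : (0 : ℝ) < n + 1 := by positivity
  have hintegrand : ∫ t in Ioo (0 : ℝ) 1, t ^ (n + 1) * (1 - α) / (1 - (1 - t) ^ (1 - α))
      = ∫ t in Ioo (0 : ℝ) 1, t ^ n * bernoulliRatio (1 - α) t :=
    integral_congr_ae (Eventually.of_forall fun t => by simp only [bernoulliRatio]; ring)
  push_cast
  rw [show (n : ℝ) + 2 - 1 = n + 1 by ring, hintegrand,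
    div_rpow hx.le (by positivity), rpow_sub_one hx.ne']
  field_simp
end

section
/- Let φ(s) = (1-s)log(1-s) for s ∈ [0,1) and let f_t(s) = 1 - (1-s)^{e^{-t}}. Then f satisfies the flow equation ∂_t f_t(s) = φ(f_t(s)) with f_0(s) = s, and its inverse in s is g_t(s) = 1 - (1-s)^{e^t}. Moreover, for fixed s ∈ (0,1) and α > 0, lim_{t→∞} f_t(g_t(s)^α) = s, i.e., lim_{t→∞} 1 - (1 - (1 - (1-s)^{e^t})^α)^{e^{-t}} = s. -/
open Real Filter Topology

/-!
Writing `a = 1 - s`, the flow is `1 - f_t(s) = a ^ exp (-t)`, so `log (1 - f_t(s)) = exp (-t) * log a`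
is linear in `exp (-t)`; this gives the flow equation, and composing two such maps multiplies the
exponents, which gives the inverse. For the limit, `u = a ^ exp t → 0` and `1 - (1 - u) ^ α ~ α u`,
so `exp (-t) * log (1 - (1 - u) ^ α)` differs from `exp (-t) * log u = log a` by
`exp (-t) * log α + o(1) → 0`.
-/

theorem hasDerivAt_one_sub_rpow_exp_neg {a : ℝ} (ha : 0 < a) (t : ℝ) :
    HasDerivAt (fun t : ℝ => 1 - a ^ exp (-t)) (a ^ exp (-t) * log (a ^ exp (-t))) t := by
  refine (((hasDerivAt_neg t).exp.const_rpow ha).const_sub 1).congr_deriv ?_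
  rw [log_rpow ha]
  ring

theorem one_sub_one_sub_rpow_rpow {s : ℝ} (hs : s ≤ 1) (p q : ℝ) :
    1 - (1 - (1 - (1 - s) ^ p)) ^ q = 1 - (1 - s) ^ (p * q) := by
  rw [sub_sub_cancel, ← rpow_mul (sub_nonneg.2 hs)]

theorem tendsto_one_sub_one_sub_rpow_div (α : ℝ) :
    Tendsto (fun x : ℝ => (1 - (1 - x) ^ α) / x) (𝓝[≠] 0) (𝓝 α) := by
  have hd : HasDerivAt (fun x : ℝ => 1 - (1 - x) ^ α) α 0 := by
    simpa using (((hasDerivAt_id (0 : ℝ)).const_sub 1).rpow_const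
      (p := α) (Or.inl (by norm_num))).const_sub 1
  refine (hasDerivAt_iff_tendsto_slope.mp hd).congr fun x => ?_
  simp [slope_def_field]

theorem tendsto_mul_log_of_tendsto_div {ι : Type*} {l : Filter ι} {ε u v : ι → ℝ} {c L : ℝ}
    (hc : c ≠ 0) (hu : ∀ i, u i ≠ 0) (hv : ∀ i, v i ≠ 0) (hε : Tendsto ε l (𝓝 0))
    (hεu : Tendsto (fun i => ε i * log (u i)) l (𝓝 L))
    (hvu : Tendsto (fun i => v i / u i) l (𝓝 c)) :
    Tendsto (fun i => ε i * log (v i)) l (𝓝 L) := by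
  have hratio : Tendsto (fun i => ε i * log (v i / u i)) l (𝓝 0) := by
    simpa using hε.mul ((continuousAt_log hc).tendsto.comp hvu)
  refine (by simpa using hratio.add hεu : Tendsto _ l (𝓝 L)).congr fun i => ?_
  rw [log_div (hv i) (hu i)]
  ring

theorem tendsto_one_sub_one_sub_rpow_rpow_exp {s : ℝ} (hs : s ∈ Set.Ioo (0 : ℝ) 1) {α : ℝ}
    (hα : 0 < α) :
    Tendsto (fun t : ℝ => 1 - (1 - (1 - (1 - s) ^ exp t) ^ α) ^ exp (-t)) atTop (𝓝 s) := by
  obtain ⟨hs0, hs1⟩ := hs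
  set a := 1 - s
  have ha0 : 0 < a := sub_pos.2 hs1
  have ha1 : a < 1 := by linarith
  set u : ℝ → ℝ := fun t => a ^ exp t
  have hu0 (t : ℝ) : 0 < u t := rpow_pos_of_pos ha0 _
  have hu1 (t : ℝ) : u t < 1 := rpow_lt_one ha0.le ha1 (exp_pos t)
  have hv0 (t : ℝ) : 0 < 1 - (1 - u t) ^ α :=
    sub_pos.2 (rpow_lt_one (by linarith [hu1 t]) (by linarith [hu0 t]) hα)
  have hu : Tendsto u atTop (𝓝[≠] 0) :=
    tendsto_nhdsWithin_of_tendsto_nhds_of_eventually_within _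
      ((tendsto_rpow_atTop_of_base_lt_one a (by linarith) ha1).comp tendsto_exp_atTop)
      (Eventually.of_forall fun t => (hu0 t).ne')
  have hεu (t : ℝ) : exp (-t) * log (u t) = log a := by
    rw [log_rpow ha0, ← mul_assoc, ← exp_add, neg_add_cancel, exp_zero, one_mul]
  have hlog : Tendsto (fun t => exp (-t) * log (1 - (1 - u t) ^ α)) atTop (𝓝 (log a)) :=
    tendsto_mul_log_of_tendsto_div hα.ne' (fun t => (hu0 t).ne') (fun t => (hv0 t).ne')
      tendsto_exp_neg_atTop_nhds_zero (tendsto_const_nhds.congr fun t => (hεu t).symm)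
      ((tendsto_one_sub_one_sub_rpow_div α).comp hu)
  have hlim := ((continuous_exp.tendsto _).comp hlog).const_sub 1
  rw [Function.comp_def, exp_log ha0, sub_sub_cancel] at hlim
  refine hlim.congr fun t => ?_
  rw [rpow_def_of_pos (hv0 t), mul_comm]

theorem stmt_19 :
    (∀ s ∈ Set.Ico (0:ℝ) 1, ∀ t : ℝ,
      HasDerivAt (fun t : ℝ => 1 - (1 - s) ^ (Real.exp (-t)))
        ((1 - (1 - (1 - s) ^ (Real.exp (-t)))) *
          Real.log (1 - (1 - (1 - s) ^ (Real.exp (-t))))) t) ∧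
    (∀ s ∈ Set.Icc (0:ℝ) 1, 1 - (1 - s) ^ (Real.exp (-(0:ℝ))) = s) ∧
    (∀ t : ℝ, ∀ s ∈ Set.Icc (0:ℝ) 1,
      1 - (1 - (1 - (1 - s) ^ (Real.exp t))) ^ (Real.exp (-t)) = s ∧
      1 - (1 - (1 - (1 - s) ^ (Real.exp (-t)))) ^ (Real.exp t) = s) ∧
    ∀ s ∈ Set.Ioo (0:ℝ) 1, ∀ α : ℝ, 0 < α →
      Tendsto (fun t : ℝ =>
          1 - (1 - (1 - (1 - s) ^ (Real.exp t)) ^ α) ^ (Real.exp (-t)))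
        atTop (nhds s) := by
  refine ⟨fun s hs t => ?_, fun s _ => ?_, fun t s hs => ?_,
    fun s hs α hα => tendsto_one_sub_one_sub_rpow_rpow_exp hs hα⟩
  · simpa only [sub_sub_cancel] using hasDerivAt_one_sub_rpow_exp_neg (sub_pos.2 hs.2) t
  · rw [neg_zero, exp_zero, rpow_one, sub_sub_cancel]
  · rw [one_sub_one_sub_rpow_rpow hs.2, one_sub_one_sub_rpow_rpow hs.2, ← exp_add, ← exp_add,
      add_neg_cancel, neg_add_cancel, exp_zero, rpow_one, sub_sub_cancel]
    exact ⟨rfl, rfl⟩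
end
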